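/- arXiv:2504.06731 — 11 statements merged into one kernel-verified Lean document; each statement's English description precedes it below -/
import Mathlib

section
/- For the FJ-MM opinion dynamics, define for each time t ≥ 0 the quantities m(t) = min{ min_i x_i(t), min_i x_i(t−1), min_i s_i } and M(t) = max{ max_i x_i(t), max_i x_i(t−1), max_i s_i }. Then the sequence m(t) is nondecreasing and the sequence M(t) is nonincreasing: m(t+1) ≥ m(t) and M(t+1) ≤ M(t) for all t ≥ 0. -/
open Matrix Filter

/-- **FJ-MM nested convex hulls (Remark 2).**
Agents are indexed by `Fin (n+1)` (so there is at least one agent).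
To encode the initial data `x(-1), x(0)`, the Lean sequence `x` is shifted by one:
`x k` stands for the paper's opinion vector `x(k-1)`, so `x 0 = x(-1)`, `x 1 = x(0)` and the
FJ-MM recursion `x(t+1) = Λ(W¹x(t) + W²x(t-1)) + (I-Λ)s` becomes the hypothesis `hx`.
The paper's quantities `m(t)` (min over `x(t)`, `x(t-1)`, `s`) and `M(t)` are encoded by
`hm`/`hM`. Conclusion: `m` is nondecreasing and `M` is nonincreasing. -/
theorem fjmm_nested_convex_hulls
    (n : ℕ) (Λ W1 W2 : Matrix (Fin (n+1)) (Fin (n+1)) ℝ)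
    (hΛdiag : ∀ i j, i ≠ j → Λ i j = 0)
    (hΛ : ∀ i, Λ i i ∈ Set.Icc (0:ℝ) 1)
    (hW1 : ∀ i j, 0 ≤ W1 i j) (hW2 : ∀ i j, 0 ≤ W2 i j)
    (hrow : ∀ i, ∑ j, (W1 + W2) i j = 1)
    (s : Fin (n+1) → ℝ) (x : ℕ → Fin (n+1) → ℝ)
    (hx : ∀ t, x (t+2) =
      Λ.mulVec (W1.mulVec (x (t+1)) + W2.mulVec (x t)) + (1 - Λ).mulVec s)
    (m M : ℕ → ℝ)
    (hm : ∀ t, m t = min (min (⨅ i, x (t+1) i) (⨅ i, x t i)) (⨅ i, s i))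
    (hM : ∀ t, M t = max (max (⨆ i, x (t+1) i) (⨆ i, x t i)) (⨆ i, s i)) :
    ∀ t, m t ≤ m (t+1) ∧ M (t+1) ≤ M t := by

  intro t
  have hbb : ∀ v : Fin (n+1) → ℝ, BddBelow (Set.range v) :=
    fun v => (Set.finite_range v).bddBelow
  have hba : ∀ v : Fin (n+1) → ℝ, BddAbove (Set.range v) :=
    fun v => (Set.finite_range v).bddAbove
  -- componentwise formula for x (t+2)
  have hcomp : ∀ i, x (t+2) i =
      Λ i i * ((∑ j, W1 i j * x (t+1) j) + ∑ j, W2 i j * x t j)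
        + (1 - Λ i i) * s i := by
    intro i
    have h1 : Λ.mulVec (W1.mulVec (x (t+1)) + W2.mulVec (x t)) i =
        Λ i i * ((∑ j, W1 i j * x (t+1) j) + ∑ j, W2 i j * x t j) := by
      unfold Matrix.mulVec dotProduct
      rw [Finset.sum_eq_single i]
      · simp [Pi.add_apply, Matrix.mulVec, dotProduct]
      · intro b _ hb; simp [hΛdiag i b (Ne.symm hb)]
      · intro h; exact absurd (Finset.mem_univ i) h
    have h2 : (1 - Λ).mulVec s i = (1 - Λ i i) * s i := by
      unfold Matrix.mulVec dotProduct
      rw [Finset.sum_eq_single i]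
      · simp [Matrix.one_apply]
      · intro b _ hb
        simp [Matrix.one_apply, Ne.symm hb, hΛdiag i b (Ne.symm hb)]
      · intro h; exact absurd (Finset.mem_univ i) h
    rw [hx t]; simp only [Pi.add_apply]; rw [h1, h2]
  have hmx1 : ∀ j, m t ≤ x (t+1) j := fun j =>
    le_trans (by rw [hm t]; exact le_trans (min_le_left _ _) (min_le_left _ _))
      (ciInf_le (hbb _) j)
  have hmx0 : ∀ j, m t ≤ x t j := fun j =>
    le_trans (by rw [hm t]; exact le_trans (min_le_left _ _) (min_le_right _ _))
      (ciInf_le (hbb _) j)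
  have hms : ∀ j, m t ≤ s j := fun j =>
    le_trans (by rw [hm t]; exact min_le_right _ _) (ciInf_le (hbb _) j)
  have hMx1 : ∀ j, x (t+1) j ≤ M t := fun j =>
    le_trans (le_ciSup (hba _) j)
      (by rw [hM t]; exact le_trans (le_max_left _ _) (le_max_left _ _))
  have hMx0 : ∀ j, x t j ≤ M t := fun j =>
    le_trans (le_ciSup (hba _) j)
      (by rw [hM t]; exact le_trans (le_max_right _ _) (le_max_left _ _))
  have hMs : ∀ j, s j ≤ M t := fun j =>
    le_trans (le_ciSup (hba _) j) (by rw [hM t]; exact le_max_right _ _)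
  have key : ∀ i, m t ≤ x (t+2) i ∧ x (t+2) i ≤ M t := by
    intro i
    have hw1 : (0:ℝ) ≤ ∑ j, W1 i j := Finset.sum_nonneg fun j _ => hW1 i j
    have hw2 : (0:ℝ) ≤ ∑ j, W2 i j := Finset.sum_nonneg fun j _ => hW2 i j
    have hw12 : (∑ j, W1 i j) + (∑ j, W2 i j) = 1 := by
      have := hrow i
      simpa [Finset.sum_add_distrib] using this
    obtain ⟨hΛ0, hΛ1⟩ := hΛ i
    constructor
    · have hS1 : (∑ j, W1 i j) * m t ≤ ∑ j, W1 i j * x (t+1) j := by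
        rw [Finset.sum_mul]
        exact Finset.sum_le_sum fun j _ => mul_le_mul_of_nonneg_left (hmx1 j) (hW1 i j)
      have hS2 : (∑ j, W2 i j) * m t ≤ ∑ j, W2 i j * x t j := by
        rw [Finset.sum_mul]
        exact Finset.sum_le_sum fun j _ => mul_le_mul_of_nonneg_left (hmx0 j) (hW2 i j)
      have hsum : (∑ j, W1 i j) * m t + (∑ j, W2 i j) * m t = m t := by
        rw [← add_mul, hw12, one_mul]
      have f1 : Λ i i * m t ≤
          Λ i i * ((∑ j, W1 i j * x (t+1) j) + ∑ j, W2 i j * x t j) := by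
        have := mul_le_mul_of_nonneg_left (add_le_add hS1 hS2) hΛ0
        rwa [hsum] at this
      have f2 : (1 - Λ i i) * m t ≤ (1 - Λ i i) * s i :=
        mul_le_mul_of_nonneg_left (hms i) (by linarith)
      rw [hcomp i]; nlinarith [f1, f2]
    · have hS1 : ∑ j, W1 i j * x (t+1) j ≤ (∑ j, W1 i j) * M t := by
        rw [Finset.sum_mul]
        exact Finset.sum_le_sum fun j _ => mul_le_mul_of_nonneg_left (hMx1 j) (hW1 i j)
      have hS2 : ∑ j, W2 i j * x t j ≤ (∑ j, W2 i j) * M t := by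
        rw [Finset.sum_mul]
        exact Finset.sum_le_sum fun j _ => mul_le_mul_of_nonneg_left (hMx0 j) (hW2 i j)
      have hsum : (∑ j, W1 i j) * M t + (∑ j, W2 i j) * M t = M t := by
        rw [← add_mul, hw12, one_mul]
      have f1 : Λ i i * ((∑ j, W1 i j * x (t+1) j) + ∑ j, W2 i j * x t j) ≤
          Λ i i * M t := by
        have := mul_le_mul_of_nonneg_left (add_le_add hS1 hS2) hΛ0
        rwa [hsum] at this
      have f2 : (1 - Λ i i) * s i ≤ (1 - Λ i i) * M t :=
        mul_le_mul_of_nonneg_left (hMs i) (by linarith)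
      rw [hcomp i]; nlinarith [f1, f2]
  constructor
  · rw [hm (t+1)]
    refine le_min (le_min (le_ciInf fun i => (key i).1) (le_ciInf hmx1)) (le_ciInf hms)
  · rw [hM (t+1)]
    exact max_le (max_le (ciSup_le fun i => (key i).2) (ciSup_le hMx1)) (ciSup_le hMs)
end

section
/- Every solution x(t) of the FJ-MM dynamics satisfies x_i(t) ∈ [m(0), M(0)] for all agents i and all t ≥ 0, where m(0) = min{ min_i x_i(0), min_i x_i(−1), min_i s_i } and M(0) = max{ max_i x_i(0), max_i x_i(−1), max_i s_i }. In particular, all solutions of the FJ-MM system are bounded. -/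
open Matrix

/-- **FJ-MM solutions stay in `[m(0), M(0)]` (Proposition 1).**
Agents are indexed by `Fin (n+1)` (so there is at least one agent).
The Lean sequence `x` is shifted by one: `x k` stands for the paper's `x(k-1)`,
so `x 0 = x(-1)`, `x 1 = x(0)` and the FJ-MM recursion
`x(t+1) = Λ(W¹x(t) + W²x(t-1)) + (I-Λ)s` is the hypothesis `hx`.
Conclusion: every opinion `x_i(t)` belongs to the interval `[m(0), M(0)]`, where
`m(0) = min{min_i x_i(0), min_i x_i(-1), min_i s_i}` and analogously for `M(0)`;
in particular all solutions are bounded. -/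
theorem fjmm_solutions_bounded
    (n : ℕ) (Λ W1 W2 : Matrix (Fin (n+1)) (Fin (n+1)) ℝ)
    (hΛdiag : ∀ i j, i ≠ j → Λ i j = 0)
    (hΛ : ∀ i, Λ i i ∈ Set.Icc (0:ℝ) 1)
    (hW1 : ∀ i j, 0 ≤ W1 i j) (hW2 : ∀ i j, 0 ≤ W2 i j)
    (hrow : ∀ i, ∑ j, (W1 + W2) i j = 1)
    (s : Fin (n+1) → ℝ) (x : ℕ → Fin (n+1) → ℝ)
    (hx : ∀ t, x (t+2) =
      Λ.mulVec (W1.mulVec (x (t+1)) + W2.mulVec (x t)) + (1 - Λ).mulVec s) :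
    ∀ t i, x t i ∈ Set.Icc
      (min (min (⨅ i, x 1 i) (⨅ i, x 0 i)) (⨅ i, s i))
      (max (max (⨆ i, x 1 i) (⨆ i, x 0 i)) (⨆ i, s i)) := by
  set m := min (min (⨅ i, x 1 i) (⨅ i, x 0 i)) (⨅ i, s i) with hm
  set M := max (max (⨆ i, x 1 i) (⨆ i, x 0 i)) (⨆ i, s i) with hMdef
  have hx0 : ∀ i, x 0 i ∈ Set.Icc m M := fun i =>
    ⟨le_trans (min_le_left _ _) (le_trans (min_le_right _ _)
        (ciInf_le (Finite.bddBelow_range _) i)),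
     le_trans (le_ciSup (Finite.bddAbove_range _) i)
        (le_trans (le_max_right _ _) (le_max_left _ _))⟩
  have hx1 : ∀ i, x 1 i ∈ Set.Icc m M := fun i =>
    ⟨le_trans (min_le_left _ _) (le_trans (min_le_left _ _)
        (ciInf_le (Finite.bddBelow_range _) i)),
     le_trans (le_ciSup (Finite.bddAbove_range _) i)
        (le_trans (le_max_left _ _) (le_max_left _ _))⟩
  have hs : ∀ i, s i ∈ Set.Icc m M := fun i =>
    ⟨le_trans (min_le_right _ _) (ciInf_le (Finite.bddBelow_range _) i),
     le_trans (le_ciSup (Finite.bddAbove_range _) i) (le_max_right _ _)⟩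
  intro t
  induction t using Nat.strong_induction_on with
  | _ t ih =>
    match t with
    | 0 => exact hx0
    | 1 => exact hx1
    | (t+2) =>
      intro i
      have h1 := ih (t+1) (by omega)
      have h0 := ih t (by omega)
      have hΛv : ∀ v : Fin (n+1) → ℝ, Λ.mulVec v i = Λ i i * v i := by
        intro v
        rw [Matrix.mulVec, dotProduct, Finset.sum_eq_single i]
        · intro j _ hj; rw [hΛdiag i j (Ne.symm hj), zero_mul]
        · simp
      have h1Λ : (1 - Λ).mulVec s i = s i - Λ i i * s i := by
        rw [Matrix.sub_mulVec]
        simp [Matrix.one_mulVec, hΛv]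
      have hrec : x (t+2) i = Λ i i * (W1.mulVec (x (t+1)) i + W2.mulVec (x t) i)
          + (s i - Λ i i * s i) := by
        have := congrFun (hx t) i
        simpa [hΛv, h1Λ] using this
      set a := W1.mulVec (x (t+1)) i with ha
      set b := W2.mulVec (x t) i with hb
      have hsum : ∀ j, W1 i j + W2 i j = (W1 + W2) i j := fun j => rfl
      have habM : a + b ≤ M := by
        have : a + b = ∑ j, (W1 i j * x (t+1) j + W2 i j * x t j) := by
          rw [ha, hb, Matrix.mulVec, Matrix.mulVec, dotProduct, dotProduct,
            Finset.sum_add_distrib]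
        rw [this]
        calc ∑ j, (W1 i j * x (t+1) j + W2 i j * x t j)
            ≤ ∑ j, (W1 + W2) i j * M := by
              apply Finset.sum_le_sum
              intro j _
              have := (h1 j).2
              have := (h0 j).2
              have := hW1 i j
              have := hW2 i j
              simp only [Matrix.add_apply]
              nlinarith
          _ = M := by rw [← Finset.sum_mul, hrow, one_mul]
      have habm : m ≤ a + b := by
        have : a + b = ∑ j, (W1 i j * x (t+1) j + W2 i j * x t j) := by
          rw [ha, hb, Matrix.mulVec, Matrix.mulVec, dotProduct, dotProduct,
            Finset.sum_add_distrib]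
        rw [this]
        calc m = ∑ j, (W1 + W2) i j * m := by rw [← Finset.sum_mul, hrow, one_mul]
          _ ≤ ∑ j, (W1 i j * x (t+1) j + W2 i j * x t j) := by
              apply Finset.sum_le_sum
              intro j _
              have := (h1 j).1
              have := (h0 j).1
              have := hW1 i j
              have := hW2 i j
              simp only [Matrix.add_apply]
              nlinarith
      obtain ⟨hl0, hl1⟩ := hΛ i
      obtain ⟨hsm, hsM⟩ := hs i
      rw [Set.mem_Icc, hrec]
      constructor <;> nlinarith
end

section
/- The number 1 is an eigenvalue of the 2n×2n block matrix Ā_d = [[0, I],[Λ W^(2), Λ W^(1)]] if and only if 1 is an eigenvalue of the n×n matrix Ā = Λ(W^(1)+W^(2)). -/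
open Matrix

/-- **`1` is an eigenvalue of `Ā_d` iff `1` is an eigenvalue of `Ā` (proof of Theorem 1).**
Here `Ā_d = [[0, I], [ΛW², ΛW¹]]` and `Ā = Λ(W¹+W²)`; eigenvalues are taken over `ℂ`
(entries mapped to `ℂ`). -/
theorem fjmm_one_eigenvalue_iff
    (n : ℕ) (Λ W1 W2 : Matrix (Fin n) (Fin n) ℝ)
    (hΛdiag : ∀ i j, i ≠ j → Λ i j = 0)
    (hΛ : ∀ i, Λ i i ∈ Set.Icc (0:ℝ) 1)
    (hW1 : ∀ i j, 0 ≤ W1 i j) (hW2 : ∀ i j, 0 ≤ W2 i j)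
    (hrow : ∀ i, ∑ j, (W1 + W2) i j = 1) :
    (∃ v : Fin n ⊕ Fin n → ℂ, v ≠ 0 ∧
        (Matrix.fromBlocks (0 : Matrix (Fin n) (Fin n) ℂ) (1 : Matrix (Fin n) (Fin n) ℂ)
          ((Λ * W2).map Complex.ofReal) ((Λ * W1).map Complex.ofReal)).mulVec v = v) ↔
      (∃ w : Fin n → ℂ, w ≠ 0 ∧
        ((Λ * (W1 + W2)).map Complex.ofReal).mulVec w = w) := by
  have hmap : ((Λ * (W1 + W2)).map Complex.ofReal)
      = (Λ * W2).map Complex.ofReal + (Λ * W1).map Complex.ofReal := by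
    ext i j
    simp [Matrix.map_apply, Matrix.add_apply, Matrix.mul_apply, mul_add,
      Finset.sum_add_distrib]
    push_cast
    ring
  constructor
  · rintro ⟨v, hv, hveq⟩
    set x : Fin n → ℂ := v ∘ Sum.inl with hx
    set y : Fin n → ℂ := v ∘ Sum.inr with hy
    have hv' : v = Sum.elim x y := by ext (i | i) <;> rfl
    rw [hv', Matrix.fromBlocks_mulVec] at hveq
    have h1 : (0 : Matrix (Fin n) (Fin n) ℂ) *ᵥ x + (1 : Matrix (Fin n) (Fin n) ℂ) *ᵥ y = x := by
      ext i; exact congrFun hveq (Sum.inl i)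
    have h2 : ((Λ * W2).map Complex.ofReal) *ᵥ x + ((Λ * W1).map Complex.ofReal) *ᵥ y = y := by
      ext i; exact congrFun hveq (Sum.inr i)
    have hyx : y = x := by simpa using h1
    refine ⟨x, ?_, ?_⟩
    · intro hx0
      apply hv
      rw [hv', hyx, hx0]
      ext (i | i) <;> simp
    · rw [hmap, Matrix.add_mulVec]
      rw [hyx] at h2
      simpa using h2
  · rintro ⟨w, hw, hweq⟩
    refine ⟨Sum.elim w w, ?_, ?_⟩
    · intro h0
      apply hw
      ext i
      exact congrFun h0 (Sum.inl i)
    · rw [Matrix.fromBlocks_mulVec]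
      ext (i | i)
      · simp
      · have := congrFun hweq i
        rw [hmap, Matrix.add_mulVec] at this
        simpa using this
end

section
/- The spectral radius of the 2n×2n block matrix Ā_d = [[0, I],[Λ W^(2), Λ W^(1)]] satisfies ρ(Ā_d) < 1 if and only if the spectral radius of Ā = Λ(W^(1)+W^(2)) satisfies ρ(Ā) < 1. Equivalently, the FJ-MM dynamics is exponentially (Schur) stable if and only if its comparison FJ system x(t+1) = Ā x(t) + (I−Λ)s is exponentially (Schur) stable. -/
open Matrix

/-- The spectral radius of a real square matrix: the supremum of the moduli of its
complex eigenvalues (elements of the spectrum of the matrix viewed over `ℂ`). -/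
noncomputable def specRad {m : Type*} [Fintype m] [DecidableEq m]
    (M : Matrix m m ℝ) : ℝ :=
  sSup ((fun z : ℂ => ‖z‖) '' spectrum ℂ (M.map Complex.ofReal))

section Aux

attribute [local instance] Matrix.linftyOpNormedRing Matrix.linftyOpNormedAlgebra

variable {m : Type*} [Fintype m] [DecidableEq m]

private lemma specRad_nonneg (M : Matrix m m ℝ) : 0 ≤ specRad M :=
  Real.sSup_nonneg (by rintro r ⟨w, -, rfl⟩; exact norm_nonneg w)

private lemma abs_le_specRad {M : Matrix m m ℝ} {z : ℂ}
    (hz : z ∈ spectrum ℂ (M.map Complex.ofReal)) : ‖z‖ ≤ specRad M := by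
  rcases isEmpty_or_nonempty m with h | h
  · haveI : Subsingleton (Matrix m m ℂ) := ⟨fun M N => by ext i j; exact h.elim i⟩
    exact absurd hz (by simp [spectrum.mem_iff, isUnit_of_subsingleton])
  · refine le_csSup ⟨‖M.map Complex.ofReal‖, ?_⟩ ⟨z, hz, rfl⟩
    rintro r ⟨w, hw, rfl⟩
    simpa using spectrum.norm_le_norm_of_mem hw

private lemma exists_spec_abs_gt {M : Matrix m m ℝ} (h1 : 1 ≤ specRad M) {ε : ℝ}
    (hε : 0 < ε) : ∃ z ∈ spectrum ℂ (M.map Complex.ofReal), 1 - ε < ‖z‖ := by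
  have hne : ((fun z : ℂ => ‖z‖) '' spectrum ℂ (M.map Complex.ofReal)).Nonempty := by
    by_contra hc
    rw [Set.not_nonempty_iff_eq_empty] at hc
    have h0 : specRad M = 0 := by rw [specRad, hc, Real.sSup_empty]
    linarith
  obtain ⟨r, hrS, hr⟩ := exists_lt_of_lt_csSup hne
    (show 1 - ε < specRad M by linarith)
  obtain ⟨z, hz, rfl⟩ := hrS
  exact ⟨z, hz, hr⟩

private lemma exists_eigenvector {B : Matrix m m ℂ} {z : ℂ}
    (hz : z ∈ spectrum ℂ B) : ∃ v : m → ℂ, v ≠ 0 ∧ B *ᵥ v = z • v := by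
  rw [spectrum.mem_iff, Matrix.isUnit_iff_isUnit_det, isUnit_iff_ne_zero, not_not] at hz
  obtain ⟨v, hv0, hv⟩ := (Matrix.exists_mulVec_eq_zero_iff).mpr hz
  refine ⟨v, hv0, ?_⟩
  rw [sub_mulVec] at hv
  have h1 : (algebraMap ℂ (Matrix m m ℂ) z) *ᵥ v = z • v := by
    ext i
    simp [Matrix.algebraMap_eq_diagonal, Matrix.mulVec_diagonal, Pi.algebraMap_apply]
  rw [h1] at hv
  exact (sub_eq_zero.mp hv).symm

private lemma row_sum_le_norm (B : Matrix m m ℂ) (i : m) : ∑ j, ‖B i j‖ ≤ ‖B‖ := by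
  have h : (∑ j, ‖B i j‖₊) ≤ ‖B‖₊ := by
    rw [Matrix.linfty_opNNNorm_def]
    exact Finset.le_sup (f := fun i => ∑ j, ‖B i j‖₊) (Finset.mem_univ i)
  calc ∑ j, ‖B i j‖ = ((∑ j, ‖B i j‖₊ : NNReal) : ℝ) := by push_cast; rfl
    _ ≤ ‖B‖ := by exact_mod_cast h

private lemma map_pow_ofReal (A : Matrix m m ℝ) (k : ℕ) :
    (A ^ k).map Complex.ofReal = (A.map Complex.ofReal) ^ k := by
  induction k with
  | zero => simp
  | succ k ih =>
    rw [pow_succ, pow_succ, ← ih]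
    ext i j
    simp [Matrix.mul_apply, Matrix.map_apply]

/-- Subinvariance: if a nonnegative matrix satisfies `A u ≥ c u` entrywise for a nonzero
nonnegative vector `u`, then `c ≤ ρ(A)`. -/
private lemma le_specRad_of_subinvariant (A : Matrix m m ℝ) (hA : ∀ i j, 0 ≤ A i j)
    (u : m → ℝ) (hu : ∀ i, 0 ≤ u i) (i₀ : m) (hi₀ : 0 < u i₀)
    (c : ℝ) (hsub : ∀ i, c * u i ≤ A.mulVec u i) : c ≤ specRad A := by
  rcases le_or_gt c 0 with hc | hc
  · exact hc.trans (specRad_nonneg A)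
  haveI : Nonempty m := ⟨i₀⟩
  haveI : CompleteSpace (Matrix m m ℂ) :=
    FiniteDimensional.complete ℂ (Matrix m m ℂ)
  set B := A.map Complex.ofReal with hB
  have hpow : ∀ k : ℕ, ∀ i j, 0 ≤ (A ^ k) i j := by
    intro k
    induction k with
    | zero =>
      intro i j
      rw [pow_zero]
      by_cases hij : i = j <;> simp [Matrix.one_apply, hij]
    | succ k ih =>
      intro i j
      rw [pow_succ, Matrix.mul_apply]
      exact Finset.sum_nonneg fun l _ => mul_nonneg (ih i l) (hA l j)
  have hiter : ∀ k : ℕ, ∀ i, c ^ k * u i ≤ ((A ^ k).mulVec u) i := by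
    intro k
    induction k with
    | zero => intro i; simp [Matrix.one_mulVec]
    | succ k ih =>
      intro i
      have h1 : ((A ^ (k + 1)).mulVec u) i = ((A ^ k).mulVec (A.mulVec u)) i := by
        rw [pow_succ, ← Matrix.mulVec_mulVec]
      rw [h1]
      calc c ^ (k + 1) * u i = c * (c ^ k * u i) := by ring
        _ ≤ c * ((A ^ k).mulVec u) i := mul_le_mul_of_nonneg_left (ih i) hc.le
        _ = ∑ j, (A ^ k) i j * (c * u j) := by
            simp only [Matrix.mulVec, dotProduct, Finset.mul_sum]
            exact Finset.sum_congr rfl fun j _ => by ring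
        _ ≤ ∑ j, (A ^ k) i j * (A.mulVec u j) :=
            Finset.sum_le_sum fun j _ =>
              mul_le_mul_of_nonneg_left (hsub j) (hpow k i j)
        _ = ((A ^ k).mulVec (A.mulVec u)) i := rfl
  set S := ∑ j, u j with hSdef
  have hS : 0 < S :=
    lt_of_lt_of_le hi₀ (Finset.single_le_sum (fun j _ => hu j) (Finset.mem_univ i₀))
  have hub : ∀ j, u j ≤ S := fun j =>
    Finset.single_le_sum (fun l _ => hu l) (Finset.mem_univ j)
  have hnorm : ∀ k : ℕ, c ^ k * u i₀ ≤ S * ‖B ^ k‖ := by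
    intro k
    have h2 : ((A ^ k).mulVec u) i₀ ≤ ∑ j, (A ^ k) i₀ j * S :=
      Finset.sum_le_sum fun j _ => mul_le_mul_of_nonneg_left (hub j) (hpow k i₀ j)
    have h3 : ∑ j, (A ^ k) i₀ j * S = S * ∑ j, ‖(B ^ k) i₀ j‖ := by
      rw [Finset.mul_sum]
      refine Finset.sum_congr rfl fun j _ => ?_
      rw [hB, ← map_pow_ofReal, Matrix.map_apply, Complex.norm_real, Real.norm_eq_abs,
        abs_of_nonneg (hpow k i₀ j)]
      ring
    calc c ^ k * u i₀ ≤ ((A ^ k).mulVec u) i₀ := hiter k i₀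
      _ ≤ ∑ j, (A ^ k) i₀ j * S := h2
      _ = S * ∑ j, ‖(B ^ k) i₀ j‖ := h3
      _ ≤ S * ‖B ^ k‖ := mul_le_mul_of_nonneg_left (row_sum_le_norm _ _) hS.le
  set δ := u i₀ / S with hδdef
  have hδ : 0 < δ := div_pos hi₀ hS
  have hlow : ∀ k : ℕ, c ^ k * δ ≤ ‖B ^ k‖ := by
    intro k
    rw [hδdef, mul_div_assoc', div_le_iff₀ hS]
    calc c ^ k * u i₀ ≤ S * ‖B ^ k‖ := hnorm k
      _ = ‖B ^ k‖ * S := by ring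
  have key : ENNReal.ofReal c ≤ spectralRadius ℂ B := by
    have hgel := spectrum.pow_norm_pow_one_div_tendsto_nhds_spectralRadius B
    have hgl : Filter.Tendsto (fun k : ℕ => ENNReal.ofReal (c * δ ^ (1 / (k : ℝ))))
        Filter.atTop (nhds (ENNReal.ofReal c)) := by
      have h0 : Filter.Tendsto (fun k : ℕ => 1 / (k : ℝ)) Filter.atTop (nhds 0) :=
        tendsto_one_div_atTop_nhds_zero_nat
      have h1 : Filter.Tendsto (fun k : ℕ => δ ^ (1 / (k : ℝ))) Filter.atTop (nhds 1) := by
        have hcont : ContinuousAt (fun x : ℝ => δ ^ x) 0 :=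
          Real.continuousAt_const_rpow hδ.ne'
        have := hcont.tendsto.comp h0
        simpa [Real.rpow_zero, Function.comp_def] using this
      have h2 : Filter.Tendsto (fun k : ℕ => c * δ ^ (1 / (k : ℝ))) Filter.atTop (nhds c) := by
        simpa using h1.const_mul c
      exact (ENNReal.continuous_ofReal.tendsto c).comp h2
    refine le_of_tendsto_of_tendsto hgl hgel ?_
    filter_upwards [Filter.eventually_ge_atTop 1] with k hk
    have hk0 : (k : ℝ) ≠ 0 := by
      have : (1 : ℝ) ≤ (k : ℝ) := by exact_mod_cast hk
      linarith
    apply ENNReal.ofReal_le_ofReal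
    have heq : c * δ ^ (1 / (k : ℝ)) = (c ^ k * δ) ^ (1 / (k : ℝ)) := by
      rw [Real.mul_rpow (pow_nonneg hc.le k) hδ.le, ← Real.rpow_natCast c k,
        ← Real.rpow_mul hc.le, mul_one_div_cancel hk0, Real.rpow_one]
    rw [heq]
    exact Real.rpow_le_rpow (mul_nonneg (pow_nonneg hc.le k) hδ.le) (hlow k)
      (by positivity)
  have key2 : spectralRadius ℂ B ≤ ENNReal.ofReal (specRad A) := by
    refine iSup₂_le fun z hz => ?_
    rw [← ENNReal.ofReal_coe_nnreal, coe_nnnorm]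
    exact ENNReal.ofReal_le_ofReal
      (by simpa using abs_le_specRad (M := A) hz)
  exact (ENNReal.ofReal_le_ofReal_iff (specRad_nonneg A)).mp (key.trans key2)

private lemma ge_one_of_forall (s : ℝ) (hs : 0 ≤ s)
    (h : ∀ ε : ℝ, 0 < ε → ε < 1 → (1 - ε) ^ 2 ≤ s) : 1 ≤ s := by
  by_contra hls
  push_neg at hls
  have h2 := h ((1 - s) / 2) (by linarith) (by linarith)
  nlinarith [sq_nonneg (1 - s)]

end Aux

/-- **Schur stability of the FJ-MM model is equivalent to that of the comparison FJ model
(Theorem 1, (i) ⟺ (ii)).**  `ρ(Ā_d) < 1 ↔ ρ(Ā) < 1`, where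
`Ā_d = [[0, I], [ΛW², ΛW¹]]` and `Ā = Λ(W¹+W²)`. -/
theorem fjmm_schur_stable_iff_comparison
    (n : ℕ) (Λ W1 W2 : Matrix (Fin n) (Fin n) ℝ)
    (hΛdiag : ∀ i j, i ≠ j → Λ i j = 0)
    (hΛ : ∀ i, Λ i i ∈ Set.Icc (0:ℝ) 1)
    (hW1 : ∀ i j, 0 ≤ W1 i j) (hW2 : ∀ i j, 0 ≤ W2 i j)
    (hrow : ∀ i, ∑ j, (W1 + W2) i j = 1) :
    specRad (Matrix.fromBlocks (0 : Matrix (Fin n) (Fin n) ℝ) (1 : Matrix (Fin n) (Fin n) ℝ)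
        (Λ * W2) (Λ * W1)) < 1 ↔
      specRad (Λ * (W1 + W2)) < 1 := by
  set C := Λ * W2 with hCdef
  set D := Λ * W1 with hDdef
  set Ab := Λ * (W1 + W2) with hAbdef
  set Ad := Matrix.fromBlocks (0 : Matrix (Fin n) (Fin n) ℝ)
    (1 : Matrix (Fin n) (Fin n) ℝ) C D with hAddef
  have hdiagmul : ∀ (W : Matrix (Fin n) (Fin n) ℝ) i j, (Λ * W) i j = Λ i i * W i j := by
    intro W i j
    rw [Matrix.mul_apply]
    exact Finset.sum_eq_single i
      (fun k _ hk => by rw [hΛdiag i k (Ne.symm hk), zero_mul])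
      (fun h => absurd (Finset.mem_univ i) h)
  have hC : ∀ i j, 0 ≤ C i j := fun i j => by
    rw [hCdef, hdiagmul]; exact mul_nonneg (hΛ i).1 (hW2 i j)
  have hD : ∀ i j, 0 ≤ D i j := fun i j => by
    rw [hDdef, hdiagmul]; exact mul_nonneg (hΛ i).1 (hW1 i j)
  have hAbCD : ∀ i j, Ab i j = C i j + D i j := by
    intro i j
    rw [hAbdef, hCdef, hDdef, hdiagmul, hdiagmul, hdiagmul, Matrix.add_apply]
    ring
  have hAb : ∀ i j, 0 ≤ Ab i j := fun i j => by
    rw [hAbCD]; exact add_nonneg (hC i j) (hD i j)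
  have hAd : ∀ s t, 0 ≤ Ad s t := by
    rintro (i | i) (j | j)
    · simp [hAddef]
    · rw [hAddef, Matrix.fromBlocks_apply₁₂]
      by_cases hij : i = j <;> simp [Matrix.one_apply, hij]
    · rw [hAddef, Matrix.fromBlocks_apply₂₁]; exact hC i j
    · rw [hAddef, Matrix.fromBlocks_apply₂₂]; exact hD i j
  have hmap : Ad.map Complex.ofReal = Matrix.fromBlocks 0 1
      (C.map Complex.ofReal) (D.map Complex.ofReal) := by
    have h0 : (0 : Matrix (Fin n) (Fin n) ℝ).map Complex.ofReal = 0 := by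
      ext i j; simp
    have h1 : (1 : Matrix (Fin n) (Fin n) ℝ).map Complex.ofReal = 1 := by
      ext i j
      by_cases hij : i = j <;> simp [Matrix.one_apply, hij]
    rw [hAddef, Matrix.fromBlocks_map, h0, h1]
  rw [← not_iff_not]
  push_neg
  constructor
  · -- 1 ≤ ρ(Ad) → 1 ≤ ρ(Ab)
    intro h
    apply ge_one_of_forall _ (specRad_nonneg _)
    intro ε hε hε1
    obtain ⟨z, hz, hzabs⟩ := exists_spec_abs_gt h hε
    obtain ⟨v, hv0, hveq⟩ := exists_eigenvector hz
    set x : Fin n → ℂ := fun i => v (Sum.inl i) with hxdef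
    set y : Fin n → ℂ := fun i => v (Sum.inr i) with hydef
    have hv' : v = Sum.elim x y := by funext s; cases s <;> rfl
    rw [hmap, hv', Matrix.fromBlocks_mulVec] at hveq
    simp only [Sum.elim_comp_inl, Sum.elim_comp_inr] at hveq
    have h_inl : ∀ i, y i = z * x i := by
      intro i
      have h1 := congrFun hveq (Sum.inl i)
      simpa [Matrix.zero_mulVec, Matrix.one_mulVec] using h1
    have hy : y = z • x := funext fun i => h_inl i
    have hx_eq : ∀ i, ((C.map Complex.ofReal) *ᵥ x) i
        + z * (((D.map Complex.ofReal) *ᵥ x) i) = z * (z * x i) := by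
      intro i
      have h2 := congrFun hveq (Sum.inr i)
      rw [hy] at h2
      simp only [Sum.elim_inr, Pi.add_apply, Pi.smul_apply, smul_eq_mul,
        Matrix.mulVec_smul] at h2
      linear_combination h2
    have hx0 : x ≠ 0 := by
      intro hx
      apply hv0
      rw [hv', hx, hy, hx]
      funext s
      cases s <;> simp
    obtain ⟨i₀, hxi₀⟩ := Function.ne_iff.mp hx0
    set u : Fin n → ℝ := fun j => ‖x j‖ with hudef
    have hu : ∀ j, 0 ≤ u j := fun j => norm_nonneg _
    have hui₀ : 0 < u i₀ := norm_pos_iff.mpr (by simpa using hxi₀)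
    set a := ‖z‖ with hadef
    have ha : 1 - ε < a := hzabs
    have hM : (0:ℝ) < max 1 a := lt_of_lt_of_le one_pos (le_max_left _ _)
    have hmv : ∀ (E : Matrix (Fin n) (Fin n) ℝ), (∀ i j, 0 ≤ E i j) → ∀ i,
        ‖((E.map Complex.ofReal) *ᵥ x) i‖ ≤ E.mulVec u i := by
      intro E hE i
      have h1 : ((E.map Complex.ofReal) *ᵥ x) i = ∑ j, (E i j : ℂ) * x j := by
        simp [Matrix.mulVec, dotProduct, Matrix.map_apply]
      rw [h1]
      refine (norm_sum_le _ _).trans (le_of_eq ?_)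
      refine Finset.sum_congr rfl fun j _ => ?_
      simp only [hudef]
      simp [norm_mul, Complex.norm_real, abs_of_nonneg (hE i j)]
    have hkey : ∀ i, a ^ 2 * u i ≤ max 1 a * (Ab.mulVec u i) := by
      intro i
      have h1 : a ^ 2 * u i = ‖((C.map Complex.ofReal) *ᵥ x) i
          + z * (((D.map Complex.ofReal) *ᵥ x) i)‖ := by
        rw [hx_eq i]
        simp only [hadef, hudef, norm_mul]
        ring
      have h2 : ‖((C.map Complex.ofReal) *ᵥ x) i
          + z * (((D.map Complex.ofReal) *ᵥ x) i)‖ ≤ C.mulVec u i + a * D.mulVec u i := by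
        refine (norm_add_le _ _).trans ?_
        have h3 := hmv C hC i
        have h4 : ‖z * (((D.map Complex.ofReal) *ᵥ x) i)‖ ≤ a * D.mulVec u i := by
          rw [norm_mul]
          exact mul_le_mul_of_nonneg_left (hmv D hD i) (norm_nonneg z)
        linarith
      have hCu : 0 ≤ C.mulVec u i := by
        have := Finset.sum_nonneg (s := Finset.univ)
          fun j (_ : j ∈ Finset.univ) => mul_nonneg (hC i j) (hu j)
        simpa [Matrix.mulVec, dotProduct] using this
      have hDu : 0 ≤ D.mulVec u i := by
        have := Finset.sum_nonneg (s := Finset.univ)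
          fun j (_ : j ∈ Finset.univ) => mul_nonneg (hD i j) (hu j)
        simpa [Matrix.mulVec, dotProduct] using this
      have h5 : Ab.mulVec u i = C.mulVec u i + D.mulVec u i := by
        simp only [Matrix.mulVec, dotProduct, ← Finset.sum_add_distrib]
        refine Finset.sum_congr rfl fun j _ => ?_
        rw [hAbCD]; ring
      have h6 : C.mulVec u i + a * D.mulVec u i
          ≤ max 1 a * (C.mulVec u i + D.mulVec u i) := by
        have hle1 : (1:ℝ) ≤ max 1 a := le_max_left _ _
        have hlea : a ≤ max 1 a := le_max_right _ _
        nlinarith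
      rw [h5]
      linarith
    have hMc : (1 - ε) ^ 2 * max 1 a ≤ a ^ 2 := by
      rcases le_total a 1 with hc1 | hc1
      · rw [max_eq_left hc1]
        nlinarith [mul_nonneg (sub_nonneg.mpr ha.le)
          (show (0:ℝ) ≤ a + (1 - ε) by linarith)]
      · rw [max_eq_right hc1]
        nlinarith [mul_le_mul_of_nonneg_right
          (show (1 - ε) ^ 2 ≤ a by nlinarith) (show (0:ℝ) ≤ a by linarith)]
    have hsub : ∀ i, (1 - ε) ^ 2 * u i ≤ Ab.mulVec u i := by
      intro i
      have hchain : max 1 a * ((1 - ε) ^ 2 * u i) ≤ max 1 a * (Ab.mulVec u i) :=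
        calc max 1 a * ((1 - ε) ^ 2 * u i) = ((1 - ε) ^ 2 * max 1 a) * u i := by ring
          _ ≤ a ^ 2 * u i := mul_le_mul_of_nonneg_right hMc (hu i)
          _ ≤ max 1 a * (Ab.mulVec u i) := hkey i
      exact le_of_mul_le_mul_left hchain hM
    exact le_specRad_of_subinvariant Ab hAb u hu i₀ hui₀ _ hsub
  · -- 1 ≤ ρ(Ab) → 1 ≤ ρ(Ad)
    intro h
    apply ge_one_of_forall _ (specRad_nonneg _)
    intro ε hε hε1
    obtain ⟨z, hz, hzabs⟩ := exists_spec_abs_gt h hε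
    obtain ⟨x, hx0, hveq⟩ := exists_eigenvector hz
    obtain ⟨i₀, hxi₀⟩ := Function.ne_iff.mp hx0
    set u : Fin n → ℝ := fun j => ‖x j‖ with hudef
    have hu : ∀ j, 0 ≤ u j := fun j => norm_nonneg _
    have hui₀ : 0 < u i₀ := norm_pos_iff.mpr (by simpa using hxi₀)
    set a := ‖z‖ with hadef
    have ha : 1 - ε < a := hzabs
    have hAu : ∀ i, a * u i ≤ Ab.mulVec u i := by
      intro i
      have h1 : ((Ab.map Complex.ofReal) *ᵥ x) i = z * x i := by
        rw [hveq]; rfl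
      have h2 : a * u i = ‖((Ab.map Complex.ofReal) *ᵥ x) i‖ := by
        rw [h1]
        simp only [hadef, hudef, norm_mul]
      rw [h2]
      have h3 : ((Ab.map Complex.ofReal) *ᵥ x) i = ∑ j, (Ab i j : ℂ) * x j := by
        simp [Matrix.mulVec, dotProduct, Matrix.map_apply]
      rw [h3]
      refine (norm_sum_le _ _).trans (le_of_eq ?_)
      refine Finset.sum_congr rfl fun j _ => ?_
      simp only [hudef]
      simp [norm_mul, Complex.norm_real, abs_of_nonneg (hAb i j)]
    set w : Fin n ⊕ Fin n → ℝ := Sum.elim u u with hwdef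
    have hw : ∀ s, 0 ≤ w s := by rintro (i | i) <;> exact hu i
    have hwi₀ : 0 < w (Sum.inl i₀) := hui₀
    have hsub : ∀ s, (1 - ε) ^ 2 * w s ≤ Ad.mulVec w s := by
      have hmv : Ad.mulVec w = Sum.elim ((0 : Matrix (Fin n) (Fin n) ℝ) *ᵥ u + 1 *ᵥ u)
          (C *ᵥ u + D *ᵥ u) := by
        rw [hAddef, hwdef, Matrix.fromBlocks_mulVec]
        simp only [Sum.elim_comp_inl, Sum.elim_comp_inr]
      rintro (i | i)
      · rw [hmv]
        simp only [Sum.elim_inl, Pi.add_apply, Matrix.zero_mulVec, Matrix.one_mulVec,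
          Pi.zero_apply, zero_add]
        have hui : 0 ≤ u i := hu i
        have hwsl : w (Sum.inl i) = u i := rfl
        rw [hwsl]
        have h1e : (1 - ε) ^ 2 ≤ 1 := by nlinarith
        nlinarith [mul_le_mul_of_nonneg_right h1e hui]
      · rw [hmv]
        simp only [Sum.elim_inr, Pi.add_apply]
        have h5 : (C *ᵥ u) i + (D *ᵥ u) i = Ab.mulVec u i := by
          simp only [Matrix.mulVec, dotProduct, ← Finset.sum_add_distrib]
          exact Finset.sum_congr rfl fun j _ => by rw [hAbCD]; ring
        have h6 := hAu i
        have hui : 0 ≤ u i := hu i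
        have hwsi : w (Sum.inr i) = u i := rfl
        rw [hwsi]
        have h1e : (1 - ε) ^ 2 ≤ a := by nlinarith
        nlinarith [mul_le_mul_of_nonneg_right h1e hui]
    exact le_specRad_of_subinvariant Ad hAd w hw (Sum.inl i₀) hwi₀ _ hsub
end

section
/- Let Ŵ be a row-stochastic n×n matrix and Λ a diagonal matrix with λ_ii ∈ [0,1]. Then ρ(Λ Ŵ) < 1 if and only if the set V̂ = { j : λ_jj < 1 } is nonempty and globally reachable in the directed graph of Ŵ; that is, if and only if for every node i there exist an integer k ≥ 0 and a node j with λ_jj < 1 such that the (i,j) entry of Ŵ^k is strictly positive. -/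
open Matrix

namespace FJaux

variable {m : Type*} [Fintype m] [DecidableEq m]

lemma mem_spectrum_iff_det (M : Matrix m m ℂ) (z : ℂ) :
    z ∈ spectrum ℂ M ↔ (z • (1 : Matrix m m ℂ) - M).det = 0 := by
  rw [spectrum.mem_iff, Algebra.algebraMap_eq_smul_one, Matrix.isUnit_iff_isUnit_det,
    isUnit_iff_ne_zero, not_ne_iff]

lemma exists_eigvec {M : Matrix m m ℂ} {z : ℂ} (hz : z ∈ spectrum ℂ M) :
    ∃ v, v ≠ 0 ∧ M.mulVec v = z • v := by
  rw [mem_spectrum_iff_det] at hz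
  obtain ⟨v, hv0, hv⟩ := Matrix.exists_mulVec_eq_zero_iff.mpr hz
  refine ⟨v, hv0, ?_⟩
  rw [Matrix.sub_mulVec, Matrix.smul_mulVec, Matrix.one_mulVec, sub_eq_zero] at hv
  exact hv.symm

lemma eig_rowsum {M : Matrix m m ℂ} {z : ℂ} {v : m → ℂ} (hv0 : v ≠ 0)
    (hv : M.mulVec v = z • v) :
    ∃ i, ‖z‖ ≤ ∑ j, ‖M i j‖ := by
  have hne : (Finset.univ : Finset m).Nonempty := by
    obtain ⟨j, hj⟩ := Function.ne_iff.mp hv0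
    exact ⟨j, Finset.mem_univ j⟩
  obtain ⟨i, -, hi⟩ := Finset.exists_max_image Finset.univ (fun i => ‖v i‖) hne
  obtain ⟨j, hj⟩ := Function.ne_iff.mp hv0
  have hvi : 0 < ‖v i‖ :=
    lt_of_lt_of_le (norm_pos_iff.mpr hj) (hi j (Finset.mem_univ j))
  refine ⟨i, ?_⟩
  have h1 : ‖z‖ * ‖v i‖ = ‖(M.mulVec v) i‖ := by
    rw [hv]; simp [Matrix.mulVec]
  have h2 : ‖(M.mulVec v) i‖ ≤ (∑ j, ‖M i j‖) * ‖v i‖ := by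
    rw [Matrix.mulVec, dotProduct, Finset.sum_mul]
    refine le_trans (norm_sum_le _ _) (Finset.sum_le_sum fun j _ => ?_)
    rw [norm_mul]
    exact mul_le_mul_of_nonneg_left (hi j (Finset.mem_univ j)) (norm_nonneg _)
  have := h1.trans_le h2
  exact le_of_mul_le_mul_right this hvi

lemma pow_eig {M : Matrix m m ℂ} {z : ℂ} {v : m → ℂ} (hv : M.mulVec v = z • v) (k : ℕ) :
    (M ^ k).mulVec v = z ^ k • v := by
  induction k with
  | zero => simp [Matrix.one_mulVec]
  | succ k ih =>
    rw [pow_succ', pow_succ', ← Matrix.mulVec_mulVec, ih, Matrix.mulVec_smul, hv,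
      smul_smul, mul_comm]

lemma map_ofReal_pow (M : Matrix m m ℝ) (k : ℕ) :
    (M.map Complex.ofReal) ^ k = (M ^ k).map Complex.ofReal := by
  have : ∀ N : Matrix m m ℝ, N.map Complex.ofReal = Complex.ofRealHom.mapMatrix N := fun _ => rfl
  rw [this, this, ← map_pow]

lemma abs_pow_le_rowsum {M : Matrix m m ℝ} {z : ℂ}
    (hz : z ∈ spectrum ℂ (M.map Complex.ofReal)) (k : ℕ) :
    ∃ i, ‖z‖ ^ k ≤ ∑ j, |(M ^ k) i j| := by
  obtain ⟨v, hv0, hv⟩ := exists_eigvec hz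
  obtain ⟨i, hi⟩ := eig_rowsum hv0 (pow_eig hv k)
  refine ⟨i, ?_⟩
  rw [norm_pow, map_ofReal_pow] at hi
  simpa [Matrix.map_apply, Complex.norm_real, Real.norm_eq_abs] using hi

lemma specRad_bddAbove (M : Matrix m m ℝ) :
    BddAbove ((fun z : ℂ => ‖z‖) '' spectrum ℂ (M.map Complex.ofReal)) := by
  refine ⟨∑ i, ∑ j, |M i j|, ?_⟩
  rintro x ⟨z, hz, rfl⟩
  obtain ⟨i, hi⟩ := abs_pow_le_rowsum hz 1
  simp only [pow_one] at hi
  refine hi.trans ?_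
  exact Finset.single_le_sum (f := fun i => ∑ j, |M i j|)
    (fun i _ => Finset.sum_nonneg fun j _ => abs_nonneg _) (Finset.mem_univ i)

lemma specRad_le_of_forall {M : Matrix m m ℝ} {c : ℝ} (hc : 0 ≤ c)
    (h : ∀ z ∈ spectrum ℂ (M.map Complex.ofReal), ‖z‖ ≤ c) :
    specRad M ≤ c :=
  Real.sSup_le (by rintro x ⟨z, hz, rfl⟩; exact h z hz) hc

lemma one_le_specRad_of_det {M : Matrix m m ℝ}
    (h : ((1 : Matrix m m ℝ) - M).det = 0) : 1 ≤ specRad M := by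
  have h1 : (1 : ℂ) ∈ spectrum ℂ (M.map Complex.ofReal) := by
    rw [mem_spectrum_iff_det, one_smul]
    have he : (1 : Matrix m m ℂ) - M.map Complex.ofReal
        = ((1 : Matrix m m ℝ) - M).map Complex.ofReal := by
      ext i j
      by_cases hij : i = j <;>
        simp [Matrix.map_apply, Matrix.sub_apply, Matrix.one_apply, hij]
    rw [he, show ((1 : Matrix m m ℝ) - M).map Complex.ofReal
        = Complex.ofRealHom.mapMatrix ((1 : Matrix m m ℝ) - M) from rfl,
      ← RingHom.map_det, h]
    simp
  exact le_csSup (specRad_bddAbove M) ⟨1, h1, by simp⟩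

lemma pow_entry_nonneg {M : Matrix m m ℝ} (h : ∀ i j, 0 ≤ M i j) :
    ∀ (k : ℕ) (i j : m), 0 ≤ (M ^ k) i j := by
  intro k
  induction k with
  | zero => intro i j; by_cases hij : i = j <;> simp [Matrix.one_apply, hij]
  | succ k ih =>
    intro i j
    rw [pow_succ, Matrix.mul_apply]
    exact Finset.sum_nonneg fun l _ => mul_nonneg (ih i l) (h l j)

end FJaux

/-- **Schur stability criterion for the FJ model (Lemma 1).**
For a row-stochastic `Ŵ` and a diagonal `Λ` with `λ_ii ∈ [0,1]`, one has `ρ(ΛŴ) < 1`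
iff the set `V̂ = {j : λ_jj < 1}` is nonempty and globally reachable in the directed
graph of `Ŵ`: for every node `i` there are `k ≥ 0` and a node `j` with `λ_jj < 1`
such that `(Ŵ^k) i j > 0`. -/
theorem fj_schur_stability_criterion
    (n : ℕ) (hn : 0 < n) (Λ What : Matrix (Fin n) (Fin n) ℝ)
    (hΛdiag : ∀ i j, i ≠ j → Λ i j = 0)
    (hΛ : ∀ i, Λ i i ∈ Set.Icc (0:ℝ) 1)
    (hWnn : ∀ i j, 0 ≤ What i j)
    (hrow : ∀ i, ∑ j, What i j = 1) :
    specRad (Λ * What) < 1 ↔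
      ((∃ j, Λ j j < 1) ∧
        ∀ i, ∃ k : ℕ, ∃ j, Λ j j < 1 ∧ 0 < (What ^ k) i j) := by
  classical
  set A := Λ * What with hAdef
  have hAentry : ∀ i j, A i j = Λ i i * What i j := by
    intro i j
    rw [hAdef, Matrix.mul_apply]
    refine Finset.sum_eq_single i (fun b _ hb => ?_) (by simp)
    rw [hΛdiag i b (Ne.symm hb), zero_mul]
  have hAnn : ∀ i j, 0 ≤ A i j := fun i j => by
    rw [hAentry]; exact mul_nonneg (hΛ i).1 (hWnn i j)
  have hArow : ∀ i, ∑ j, A i j = Λ i i := fun i => by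
    simp_rw [hAentry]
    rw [← Finset.mul_sum, hrow i, mul_one]
  have hApow_nn := FJaux.pow_entry_nonneg hAnn
  have hWpow_nn := FJaux.pow_entry_nonneg hWnn
  have hrowsucc : ∀ (k : ℕ) i, ∑ j, (A ^ (k+1)) i j = ∑ l, (A ^ k) i l * Λ l l := by
    intro k i
    rw [pow_succ]
    simp_rw [Matrix.mul_apply]
    rw [Finset.sum_comm]
    simp_rw [← Finset.mul_sum, hArow]
  have hApow_row : ∀ (k : ℕ) i, ∑ j, (A ^ k) i j ≤ 1 := by
    intro k
    induction k with
    | zero => intro i; simp [Matrix.one_apply]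
    | succ k ih =>
      intro i
      rw [hrowsucc k i]
      calc ∑ l, (A ^ k) i l * Λ l l ≤ ∑ l, (A ^ k) i l * 1 :=
            Finset.sum_le_sum fun l _ =>
              mul_le_mul_of_nonneg_left (hΛ l).2 (hApow_nn k i l)
        _ = ∑ l, (A ^ k) i l := by simp
        _ ≤ 1 := ih i
  -- transfer reachability in What to positivity for A
  have key1 : ∀ (k : ℕ) i j, Λ j j < 1 → 0 < (What ^ k) i j →
      ∃ k' j', Λ j' j' < 1 ∧ 0 < (A ^ k') i j' := by
    intro k
    induction k with
    | zero =>
      intro i j hj hpos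
      rw [pow_zero, Matrix.one_apply] at hpos
      have hij : i = j := by
        by_contra hne; simp [hne] at hpos
      exact ⟨0, i, hij ▸ hj, by simp [Matrix.one_apply]⟩
    | succ k ih =>
      intro i j hj hpos
      rw [pow_succ', Matrix.mul_apply] at hpos
      obtain ⟨l, hl⟩ : ∃ l, 0 < What i l * (What ^ k) l j := by
        by_contra hcon
        push_neg at hcon
        exact absurd hpos (not_lt.mpr (Finset.sum_nonpos fun l _ => hcon l))
      have hWl : 0 < What i l ∧ 0 < (What ^ k) l j := by
        rcases mul_pos_iff.mp hl with h | h
        · exact h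
        · exact absurd h.1 (not_lt.mpr (hWnn i l))
      by_cases hi : Λ i i < 1
      · exact ⟨0, i, hi, by simp [Matrix.one_apply]⟩
      · obtain ⟨k', j', hj', hA'⟩ := ih l j hj hWl.2
        refine ⟨k' + 1, j', hj', ?_⟩
        rw [pow_succ', Matrix.mul_apply]
        have hΛi : Λ i i = 1 := le_antisymm (hΛ i).2 (not_lt.mp hi)
        have hterm : 0 < A i l * (A ^ k') l j' := by
          rw [hAentry, hΛi, one_mul]
          exact mul_pos hWl.1 hA'
        exact lt_of_lt_of_le hterm
          (Finset.single_le_sum (f := fun x => A i x * (A ^ k') x j')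
            (fun x _ => mul_nonneg (hAnn i x) (hApow_nn k' x j')) (Finset.mem_univ l))
  constructor
  · -- ρ < 1 → condition
    intro h
    by_contra hc
    suffices hge : 1 ≤ specRad A from absurd h (not_lt.mpr hge)
    by_cases hall : ∀ j, (1:ℝ) ≤ Λ j j
    · -- all λ = 1 : row sums of A are 1
      refine FJaux.one_le_specRad_of_det ?_
      rw [← Matrix.exists_mulVec_eq_zero_iff]
      refine ⟨fun _ => 1, fun h0 => one_ne_zero (congrFun h0 ⟨0, hn⟩), ?_⟩
      ext i
      rw [Matrix.sub_mulVec, Matrix.one_mulVec]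
      have : (A.mulVec fun _ => (1:ℝ)) i = ∑ j, A i j := by
        simp [Matrix.mulVec, dotProduct]
      simp only [Pi.sub_apply, Pi.zero_apply, this, hArow i,
        le_antisymm (hΛ i).2 (hall i)]
      ring
    · push_neg at hall
      obtain ⟨j₁, hj₁⟩ := hall
      have hQ : ¬ ∀ i, ∃ k : ℕ, ∃ j, Λ j j < 1 ∧ 0 < (What ^ k) i j :=
        fun q => hc ⟨⟨j₁, hj₁⟩, q⟩
      push_neg at hQ
      obtain ⟨i₀, hbad⟩ := hQ
      set S : Fin n → Prop := fun j => ∃ k : ℕ, 0 < (What ^ k) i₀ j with hSdef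
      have hi₀ : S i₀ := ⟨0, by simp [Matrix.one_apply]⟩
      have hSlam : ∀ j, S j → Λ j j = 1 := by
        rintro j ⟨k, hk⟩
        by_contra hne
        exact absurd hk (not_lt.mpr (hbad k j (lt_of_le_of_ne (hΛ j).2 hne)))
      have hSclosed : ∀ j l, S j → 0 < What j l → S l := by
        rintro j l ⟨k, hk⟩ hjl
        refine ⟨k + 1, ?_⟩
        rw [pow_succ, Matrix.mul_apply]
        exact lt_of_lt_of_le (mul_pos hk hjl)
          (Finset.single_le_sum (f := fun x => (What ^ k) i₀ x * What x l)
            (fun x _ => mul_nonneg (hWpow_nn k i₀ x) (hWnn x l)) (Finset.mem_univ j))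
      have hAzero : ∀ j l, S j → ¬ S l → A j l = 0 := by
        intro j l hj hl
        have hw : What j l = 0 := by
          by_contra hne
          exact hl (hSclosed j l hj (lt_of_le_of_ne (hWnn j l) (Ne.symm hne)))
        rw [hAentry, hw, mul_zero]
      refine FJaux.one_le_specRad_of_det ?_
      set M : Matrix (Fin n) (Fin n) ℝ := 1 - A with hMdef
      have hMout : ∀ j l, S j → ¬ S l → M j l = 0 := by
        intro j l hj hl
        have hjl : j ≠ l := fun h => hl (h ▸ hj)
        rw [hMdef, Matrix.sub_apply, Matrix.one_apply_ne hjl, hAzero j l hj hl, sub_zero]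
      have hMrow : ∀ j, S j → ∑ l, M j l = 0 := by
        intro j hj
        rw [hMdef]
        simp_rw [Matrix.sub_apply]
        rw [Finset.sum_sub_distrib, hArow j, hSlam j hj]
        simp [Matrix.one_apply]
      -- block-triangular determinant argument
      let e := Equiv.sumCompl S
      rw [← Matrix.det_submatrix_equiv_self e M,
        ← Matrix.fromBlocks_toBlocks (M.submatrix e e)]
      have h12 : (M.submatrix e e).toBlocks₁₂ = 0 := by
        ext a b
        simp only [Matrix.toBlocks₁₂, Matrix.submatrix_apply, Matrix.of_apply,
          Matrix.zero_apply]
        exact hMout _ _ a.2 b.2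
      rw [h12, Matrix.det_fromBlocks_zero₁₂]
      have hB11 : (M.submatrix e e).toBlocks₁₁.det = 0 := by
        rw [← Matrix.exists_mulVec_eq_zero_iff]
        refine ⟨fun _ => 1, fun h0 => one_ne_zero (congrFun h0 ⟨i₀, hi₀⟩), ?_⟩
        ext a
        have hval : ((M.submatrix e e).toBlocks₁₁.mulVec fun _ => (1:ℝ)) a
            = ∑ b : {j // S j}, M a.1 b.1 := by
          simp [Matrix.mulVec, dotProduct, Matrix.toBlocks₁₁, e]
        rw [hval]
        have hsplit : ∑ b : {j // S j}, M a.1 b.1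
            = ∑ l ∈ Finset.univ.filter S, M a.1 l := by
          exact (Finset.sum_subtype (p := S) (Finset.univ.filter S)
            (fun x => by simp) (fun l => M a.1 l)).symm
        have hnotS : ∑ l ∈ Finset.univ.filter (fun l => ¬ S l), M a.1 l = 0 :=
          Finset.sum_eq_zero fun l hl =>
            hMout a.1 l a.2 (Finset.mem_filter.mp hl).2
        have htot := Finset.sum_filter_add_sum_filter_not Finset.univ S (fun l => M a.1 l)
        rw [hsplit, Pi.zero_apply]
        have := hMrow a.1 a.2
        rw [← htot, hnotS, add_zero] at this
        exact this
      rw [hB11, zero_mul]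
  · -- condition → ρ < 1
    rintro ⟨-, hreach⟩
    have hch : ∀ i, ∃ k : ℕ, ∃ j, Λ j j < 1 ∧ 0 < (A ^ k) i j := by
      intro i
      obtain ⟨k, j, hj, hp⟩ := hreach i
      obtain ⟨k', j', h1, h2⟩ := key1 k i j hj hp
      exact ⟨k', j', h1, h2⟩
    choose g jj hjj hg using hch
    set N : ℕ := Finset.univ.sup g + 1 with hNdef
    have key2 : ∀ i, ∑ j, (A ^ (g i + 1)) i j < 1 := by
      intro i
      rw [hrowsucc (g i) i]
      calc ∑ l, (A ^ (g i)) i l * Λ l l < ∑ l, (A ^ (g i)) i l := by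
            refine Finset.sum_lt_sum (fun l _ =>
              mul_le_of_le_one_right (hApow_nn (g i) i l) (hΛ l).2)
              ⟨jj i, Finset.mem_univ _, ?_⟩
            exact mul_lt_of_lt_one_right (hg i) (hjj i)
        _ ≤ 1 := hApow_row (g i) i
    have hrowN : ∀ i, ∑ j, (A ^ N) i j < 1 := by
      intro i
      have h2 : g i ≤ Finset.univ.sup g := Finset.le_sup (Finset.mem_univ i)
      have hNsplit : N = (g i + 1) + (Finset.univ.sup g - g i) := by omega
      rw [hNsplit, pow_add]
      calc ∑ j, (A ^ (g i + 1) * A ^ (Finset.univ.sup g - g i)) i j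
          = ∑ l, (A ^ (g i + 1)) i l * ∑ j, (A ^ (Finset.univ.sup g - g i)) l j := by
            simp_rw [Matrix.mul_apply]
            rw [Finset.sum_comm]
            simp_rw [← Finset.mul_sum]
        _ ≤ ∑ l, (A ^ (g i + 1)) i l * 1 :=
            Finset.sum_le_sum fun l _ =>
              mul_le_mul_of_nonneg_left (hApow_row _ l) (hApow_nn _ i l)
        _ = ∑ l, (A ^ (g i + 1)) i l := by simp
        _ < 1 := key2 i
    have hne : (Finset.univ : Finset (Fin n)).Nonempty := ⟨⟨0, hn⟩, Finset.mem_univ _⟩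
    set c : ℝ := Finset.univ.sup' hne (fun i => ∑ j, (A ^ N) i j) with hcdef
    have hc1 : c < 1 := (Finset.sup'_lt_iff hne).mpr fun i _ => hrowN i
    have hc0 : 0 ≤ c := le_trans
      (Finset.sum_nonneg fun j _ => hApow_nn N ⟨0, hn⟩ j)
      (Finset.le_sup' (f := fun i => ∑ j, (A ^ N) i j) (Finset.mem_univ (⟨0, hn⟩ : Fin n)))
    set b : ℝ := c ^ ((N : ℝ)⁻¹) with hbdef
    have hb0 : 0 ≤ b := Real.rpow_nonneg hc0 _
    have hNpos : 0 < N := Nat.succ_pos _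
    have hb1 : b < 1 := Real.rpow_lt_one hc0 hc1 (by positivity)
    have hbN : b ^ N = c := by
      rw [hbdef, ← Real.rpow_natCast (c ^ ((N:ℝ)⁻¹)) N, ← Real.rpow_mul hc0,
        inv_mul_cancel₀ (by positivity : (N:ℝ) ≠ 0), Real.rpow_one]
    refine lt_of_le_of_lt (FJaux.specRad_le_of_forall hb0 ?_) hb1
    intro z hz
    obtain ⟨i, hi⟩ := FJaux.abs_pow_le_rowsum hz N
    have hle : ‖z‖ ^ N ≤ c := by
      refine hi.trans ?_
      have habs : ∑ j, |(A ^ N) i j| = ∑ j, (A ^ N) i j :=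
        Finset.sum_congr rfl fun j _ => abs_of_nonneg (hApow_nn N i j)
      rw [habs]
      exact Finset.le_sup' (f := fun i => ∑ j, (A ^ N) i j) (Finset.mem_univ i)
    by_contra hcon
    push_neg at hcon
    have hlt : b ^ N < ‖z‖ ^ N := pow_lt_pow_left₀ hcon hb0 hNpos.ne'
    rw [hbN] at hlt
    exact absurd hle (not_le.mpr hlt)
end

section
/- The spectral radius of the 2n×2n block matrix Ā_d = [[0, I],[Λ W^(2), Λ W^(1)]] satisfies ρ(Ā_d) < 1 if and only if for every node i there exist an integer k ≥ 0 and a node j with λ_jj < 1 such that the (i,j) entry of (W^(1)+W^(2))^k is strictly positive (i.e., the set of nodes with λ_jj < 1 is nonempty and globally reachable in the graph of W^(1)+W^(2)). -/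
open Matrix

open Filter

attribute [local instance] Matrix.linftyOpNormedAddCommGroup Matrix.linftyOpNormedRing
  Matrix.linftyOpNormedAlgebra

variable {ι : Type*} [Fintype ι] [DecidableEq ι] [Nonempty ι]

example : CompleteSpace (Matrix ι ι ℂ) :=
  inferInstance

set_option linter.unusedSectionVars false
lemma mapC_pow (M : Matrix ι ι ℝ) (k : ℕ) :
    (M.map Complex.ofReal) ^ k = (M ^ k).map Complex.ofReal := by
  have h := map_pow (Complex.ofRealHom.mapMatrix : Matrix ι ι ℝ →+* Matrix ι ι ℂ) M k
  exact h.symm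

lemma row_sum_le_linftyNorm (M : Matrix ι ι ℂ) (p : ι) : ∑ q, ‖M p q‖ ≤ ‖M‖ := by
  rw [Matrix.linfty_opNorm_def]
  have h : (∑ q, ‖M p q‖₊) ≤ Finset.univ.sup (fun i => ∑ q, ‖M i q‖₊) :=
    Finset.le_sup (f := fun i => ∑ q, ‖M i q‖₊) (Finset.mem_univ p)
  calc ∑ q, ‖M p q‖ = ((∑ q, ‖M p q‖₊ : NNReal) : ℝ) := by push_cast; rfl
    _ ≤ _ := by exact_mod_cast h


lemma specRad_lt_one_of_pow (M : Matrix ι ι ℝ) (m : ℕ) (hm : 0 < m)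
    (h : ‖(M ^ m).map Complex.ofReal‖ < 1) : specRad M < 1 := by
  set a := M.map Complex.ofReal with ha
  have hapow : a ^ m = (M ^ m).map Complex.ofReal := mapC_pow M m
  set c := ‖(M ^ m).map Complex.ofReal‖ with hc
  have hc0 : 0 ≤ c := norm_nonneg _
  have hm' : (0:ℝ) < 1 / (m:ℝ) := by positivity
  have key : ∀ z ∈ spectrum ℂ a, ‖z‖ ≤ c ^ (1 / (m:ℝ)) := by
    intro z hz
    have hzm : z ^ m ∈ spectrum ℂ (a ^ m) := by
      have hsub := spectrum.subset_polynomial_aeval a (Polynomial.X ^ m : Polynomial ℂ)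
      have hmem : z ^ m ∈ (fun k => Polynomial.eval k ((Polynomial.X : Polynomial ℂ) ^ m)) ''
          spectrum ℂ a := ⟨z, hz, by simp⟩
      simpa using hsub hmem
    have h1 : ‖z ^ m‖ ≤ ‖a ^ m‖ := spectrum.norm_le_norm_of_mem hzm
    rw [hapow, ← hc] at h1
    have h2 : ‖z‖ ^ m ≤ c := by
      simpa using h1
    have h3 := Real.rpow_le_rpow (by positivity) h2 hm'.le
    calc ‖z‖ = (‖z‖ ^ m) ^ (1/(m:ℝ)) := by
          rw [← Real.rpow_natCast ‖z‖ m, ← Real.rpow_mul (by positivity),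
            mul_one_div, div_self (by exact_mod_cast hm.ne'), Real.rpow_one]
      _ ≤ c ^ (1/(m:ℝ)) := h3
  have hlt : c ^ (1/(m:ℝ)) < 1 := Real.rpow_lt_one hc0 h hm'
  refine lt_of_le_of_lt ?_ hlt
  apply Real.sSup_le
  · rintro x ⟨z, hz, rfl⟩; exact key z hz
  · positivity

lemma one_le_specRad_of_pow (M : Matrix ι ι ℝ)
    (h : ∀ k : ℕ, 1 ≤ ‖(M ^ k).map Complex.ofReal‖) : 1 ≤ specRad M := by
  set a := M.map Complex.ofReal with ha
  haveI : CompleteSpace (Matrix ι ι ℂ) :=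
    inferInstance
  have hge : (1 : ENNReal) ≤ spectralRadius ℂ a := by
    refine ge_of_tendsto (spectrum.pow_nnnorm_pow_one_div_tendsto_nhds_spectralRadius a) ?_
    filter_upwards with k
    have h1 : (1:NNReal) ≤ ‖a ^ k‖₊ := by
      rw [mapC_pow]
      exact_mod_cast h k
    calc (1:ENNReal) = 1 ^ (1/(k:ℝ)) := (ENNReal.one_rpow _).symm
      _ ≤ (‖a ^ k‖₊ : ENNReal) ^ (1/(k:ℝ)) :=
        ENNReal.rpow_le_rpow (by exact_mod_cast h1) (by positivity)
  have hbdd : BddAbove ((fun z : ℂ => ‖z‖) '' spectrum ℂ a) := by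
    refine ⟨‖a‖, ?_⟩
    rintro x ⟨z, hz, rfl⟩
    simpa using spectrum.norm_le_norm_of_mem hz
  have hub : spectralRadius ℂ a ≤ ENNReal.ofReal (specRad M) := by
    refine iSup₂_le fun z hz => ?_
    have hzle : ‖z‖ ≤ specRad M := le_csSup hbdd ⟨z, hz, rfl⟩
    rw [← enorm_eq_nnnorm, ← ofReal_norm]
    exact ENNReal.ofReal_le_ofReal (by simpa using hzle)
  have h2 := hge.trans hub
  exact ENNReal.one_le_ofReal.mp h2

lemma pow_entry_nonneg {N : Type*} [Fintype N] [DecidableEq N]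
    {M : Matrix N N ℝ} (h : ∀ i j, 0 ≤ M i j) (k : ℕ) : ∀ i j, 0 ≤ (M ^ k) i j := by
  induction k with
  | zero =>
    intro i j
    rw [pow_zero]
    by_cases hij : i = j <;> simp [Matrix.one_apply, hij]
  | succ k ih =>
    intro i j
    rw [pow_succ, Matrix.mul_apply]
    exact Finset.sum_nonneg fun l _ => mul_nonneg (ih i l) (h l j)


/-- **Graph-theoretic Schur stability criterion for the FJ-MM model (Theorem 1, (i) ⟺ (iii)).**
`ρ(Ā_d) < 1` for `Ā_d = [[0, I], [ΛW², ΛW¹]]` iff the set of nodes `j` with `λ_jj < 1`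
is nonempty and globally reachable in the graph of `W¹+W²`: for every node `i` there are
`k ≥ 0` and a node `j` with `λ_jj < 1` such that `((W¹+W²)^k) i j > 0`. -/
theorem fjmm_schur_stable_iff_globally_reachable
    (n : ℕ) (hn : 0 < n) (Λ W1 W2 : Matrix (Fin n) (Fin n) ℝ)
    (hΛdiag : ∀ i j, i ≠ j → Λ i j = 0)
    (hΛ : ∀ i, Λ i i ∈ Set.Icc (0:ℝ) 1)
    (hW1 : ∀ i j, 0 ≤ W1 i j) (hW2 : ∀ i j, 0 ≤ W2 i j)
    (hrow : ∀ i, ∑ j, (W1 + W2) i j = 1) :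
    specRad (Matrix.fromBlocks (0 : Matrix (Fin n) (Fin n) ℝ) (1 : Matrix (Fin n) (Fin n) ℝ)
        (Λ * W2) (Λ * W1)) < 1 ↔
      ((∃ j, Λ j j < 1) ∧
        ∀ i, ∃ k : ℕ, ∃ j, Λ j j < 1 ∧ 0 < ((W1 + W2) ^ k) i j) := by
  classical
  haveI : Nonempty (Fin n) := ⟨⟨0, hn⟩⟩
  set S := W1 + W2 with hS
  set A := Matrix.fromBlocks (0 : Matrix (Fin n) (Fin n) ℝ) 1 (Λ * W2) (Λ * W1) with hA
  have hΛ0 : ∀ i, 0 ≤ Λ i i := fun i => (hΛ i).1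
  have hΛ1 : ∀ i, Λ i i ≤ 1 := fun i => (hΛ i).2
  have hS_nonneg : ∀ i j, 0 ≤ S i j := fun i j => add_nonneg (hW1 i j) (hW2 i j)
  have hSpow : ∀ k i j, 0 ≤ (S ^ k) i j := fun k => pow_entry_nonneg hS_nonneg k
  have hΛmul : ∀ (W : Matrix (Fin n) (Fin n) ℝ) i j, (Λ * W) i j = Λ i i * W i j := by
    intro W i j
    rw [Matrix.mul_apply]
    refine Finset.sum_eq_single i (fun b _ hb => ?_) (by simp)
    rw [hΛdiag i b (Ne.symm hb), zero_mul]
  have hA_nonneg : ∀ p q, 0 ≤ A p q := by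
    rintro (i | i) (j | j)
    · simp [hA]
    · by_cases h : i = j <;> simp [hA, Matrix.one_apply, h]
    · rw [hA, Matrix.fromBlocks_apply₂₁, hΛmul]
      exact mul_nonneg (hΛ0 i) (hW2 i j)
    · rw [hA, Matrix.fromBlocks_apply₂₂, hΛmul]
      exact mul_nonneg (hΛ0 i) (hW1 i j)
  set u : ℕ → (Fin n ⊕ Fin n) → ℝ := fun m => (A ^ m) *ᵥ (fun _ => 1) with hu
  have hu0 : ∀ p, u 0 p = 1 := by intro p; simp [hu]
  have hu_succ : ∀ m p, u (m+1) p = (A *ᵥ u m) p := by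
    intro m p
    rw [hu]
    simp only []
    rw [pow_succ', ← Matrix.mulVec_mulVec]
  have hmul_inl : ∀ (v : (Fin n ⊕ Fin n) → ℝ) j, (A *ᵥ v) (Sum.inl j) = v (Sum.inr j) := by
    intro v j
    simp [Matrix.mulVec, dotProduct, Fintype.sum_sum_type, hA, Matrix.one_apply]
  have hmul_inr : ∀ (v : (Fin n ⊕ Fin n) → ℝ) j, (A *ᵥ v) (Sum.inr j) =
      Λ j j * ∑ l, (W2 j l * v (Sum.inl l) + W1 j l * v (Sum.inr l)) := by
    intro v j
    simp only [Matrix.mulVec, dotProduct, Fintype.sum_sum_type, hA,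
      Matrix.fromBlocks_apply₂₁, Matrix.fromBlocks_apply₂₂, hΛmul]
    rw [Finset.mul_sum, ← Finset.sum_add_distrib]
    apply Finset.sum_congr rfl
    intro l _
    ring
  have hmulVec_mono : ∀ (x y : (Fin n ⊕ Fin n) → ℝ), (∀ p, x p ≤ y p) →
      ∀ p, (A *ᵥ x) p ≤ (A *ᵥ y) p := by
    intro x y hxy p
    simp only [Matrix.mulVec, dotProduct]
    exact Finset.sum_le_sum fun q _ => mul_le_mul_of_nonneg_left (hxy q) (hA_nonneg p q)
  have hu_nonneg : ∀ m p, 0 ≤ u m p := by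
    intro m
    induction m with
    | zero => intro p; rw [hu0]; norm_num
    | succ m ih =>
      intro p
      rw [hu_succ]
      simp only [Matrix.mulVec, dotProduct]
      exact Finset.sum_nonneg fun q _ => mul_nonneg (hA_nonneg p q) (ih q)
  have hsum_one : ∀ (v : (Fin n ⊕ Fin n) → ℝ) j, (∀ p, v p = 1) →
      ∑ l, (W2 j l * v (Sum.inl l) + W1 j l * v (Sum.inr l)) = 1 := by
    intro v j hv
    rw [← hrow j]
    apply Finset.sum_congr rfl
    intro l _
    rw [hv, hv, hS, Matrix.add_apply]
    ring
  have hu_step : ∀ m p, u (m+1) p ≤ u m p := by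
    intro m
    induction m with
    | zero =>
      intro p
      rcases p with j | j
      · rw [hu_succ, hmul_inl, hu0, hu0]
      · rw [hu_succ, hmul_inr, hsum_one (u 0) j hu0, mul_one, hu0]
        exact hΛ1 j
    | succ m ih =>
      intro p
      rw [hu_succ, hu_succ]
      exact hmulVec_mono _ _ ih p
  have hu_anti : ∀ {m m' : ℕ}, m ≤ m' → ∀ p, u m' p ≤ u m p := by
    intro m m' h
    induction h with
    | refl => exact fun p => le_rfl
    | step h ih => exact fun p => (hu_step _ p).trans (ih p)
  have hu_le_one : ∀ m p, u m p ≤ 1 := fun m p => (hu_anti (Nat.zero_le m) p).trans (hu0 p).le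
  have hu_rowsum : ∀ m p, ∑ q, (A ^ m) p q = u m p := by
    intro m p
    simp [hu, Matrix.mulVec, dotProduct]
  have hApow : ∀ k p q, 0 ≤ (A ^ k) p q := fun k => pow_entry_nonneg hA_nonneg k
  have hstep_reach : ∀ k i j l, 0 < (S ^ k) i j → 0 < S j l → 0 < (S ^ (k+1)) i l := by
    intro k i j l h1 h2
    have he : (S ^ (k+1)) i l = ∑ m', (S ^ k) i m' * S m' l := by
      rw [pow_succ, Matrix.mul_apply]
    rw [he]
    refine lt_of_lt_of_le (mul_pos h1 h2) ?_
    exact Finset.single_le_sum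
      (f := fun m' => (S ^ k) i m' * S m' l)
      (fun m' _ => mul_nonneg (hSpow k i m') (hS_nonneg m' l)) (Finset.mem_univ j)
  constructor
  · -- stability implies reachability
    intro hspec
    by_contra hcon
    push_neg at hcon
    obtain ⟨i, hi⟩ : ∃ i, ∀ k j, 0 < (S ^ k) i j → Λ j j = 1 := by
      by_cases hP : ∃ j, Λ j j < 1
      · obtain ⟨i, hi⟩ := hcon hP
        exact ⟨i, fun k j hpos =>
          le_antisymm (hΛ1 j) (not_lt.mp fun hlt => (hi k j hlt).not_gt hpos)⟩
      · have hall : ∀ j, Λ j j = 1 := fun j =>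
          le_antisymm (hΛ1 j) (not_lt.mp fun h => hP ⟨j, h⟩)
        exact ⟨Classical.arbitrary _, fun k j _ => hall j⟩
    have hkey : ∀ m j, (∃ k, 0 < (S ^ k) i j) → u m (Sum.inl j) = 1 ∧ u m (Sum.inr j) = 1 := by
      intro m
      induction m with
      | zero => intro j _; exact ⟨hu0 _, hu0 _⟩
      | succ m ih =>
        intro j hj
        obtain ⟨k, hk⟩ := hj
        constructor
        · rw [hu_succ, hmul_inl]
          exact (ih j ⟨k, hk⟩).2
        · rw [hu_succ, hmul_inr]
          have hsum : ∑ l, (W2 j l * u m (Sum.inl l) + W1 j l * u m (Sum.inr l)) = 1 := by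
            rw [← hrow j]
            apply Finset.sum_congr rfl
            intro l _
            by_cases hSl : 0 < S j l
            · obtain ⟨h1, h2⟩ := ih l ⟨k + 1, hstep_reach k i j l hk hSl⟩
              rw [h1, h2, hS, Matrix.add_apply]
              ring
            · have h0 : S j l = 0 := le_antisymm (not_lt.mp hSl) (hS_nonneg j l)
              have hsplit : W1 j l + W2 j l = 0 := by rw [← Matrix.add_apply, ← hS]; exact h0
              have hW10 : W1 j l = 0 := by linarith [hW1 j l, hW2 j l]
              have hW20 : W2 j l = 0 := by linarith [hW1 j l, hW2 j l]
              rw [hW10, hW20, hS, Matrix.add_apply, hW10, hW20]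
              ring
          rw [hsum, mul_one]
          exact hi k j hk
    have hi0 : (0:ℝ) < (S ^ 0) i i := by
      rw [pow_zero, Matrix.one_apply_eq]; norm_num
    have hiR : ∀ k, u k (Sum.inr i) = 1 := fun k => (hkey k i ⟨0, hi0⟩).2
    have hnorm : ∀ k : ℕ, 1 ≤ ‖((A ^ k).map Complex.ofReal)‖ := by
      intro k
      refine le_trans ?_ (row_sum_le_linftyNorm ((A ^ k).map Complex.ofReal) (Sum.inr i))
      have he : ∀ q, ‖((A ^ k).map Complex.ofReal) (Sum.inr i) q‖ = (A ^ k) (Sum.inr i) q := by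
        intro q
        rw [Matrix.map_apply, Complex.norm_real, Real.norm_eq_abs]
        exact abs_of_nonneg (hApow k _ q)
      rw [Finset.sum_congr rfl fun q _ => he q, hu_rowsum, hiR k]
    exact absurd hspec (not_lt.mpr (one_le_specRad_of_pow A hnorm))
  · rintro ⟨-, hreach⟩
    have hkey : ∀ k i j, 0 < (S ^ k) i j → Λ j j < 1 → u (2*k+1) (Sum.inr i) < 1 := by
      intro k
      induction k with
      | zero =>
        intro i j hpos hj
        have hij : i = j := by
          by_contra hne
          rw [pow_zero, Matrix.one_apply_ne hne] at hpos
          exact lt_irrefl 0 hpos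
        subst hij
        have h1 : u (2*0+1) (Sum.inr i) = Λ i i := by
          rw [show 2*0+1 = 0+1 by ring, hu_succ, hmul_inr, hsum_one (u 0) i hu0, mul_one]
        rw [h1]; exact hj
      | succ k ih =>
        intro i j hpos hj
        have he : (S ^ (k+1)) i j = ∑ l, S i l * (S ^ k) l j := by
          rw [pow_succ', Matrix.mul_apply]
        obtain ⟨l, hl⟩ : ∃ l, 0 < S i l * (S ^ k) l j := by
          by_contra hno
          push_neg at hno
          have hle : (S ^ (k+1)) i j ≤ 0 := by
            rw [he]; exact Finset.sum_nonpos fun l _ => hno l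
          exact absurd hpos (not_lt.mpr hle)
        obtain ⟨hSil, hSkl⟩ : 0 < S i l ∧ 0 < (S ^ k) l j := by
          rcases mul_pos_iff.mp hl with h | h
          · exact h
          · exact absurd h.1 (not_lt.mpr (hS_nonneg i l))
        have hul : u (2*k+1) (Sum.inr l) < 1 := ih l j hSkl hj
        have ha : u (2*k+2) (Sum.inl l) < 1 := by
          rw [show 2*k+2 = (2*k+1)+1 by ring, hu_succ, hmul_inl]
          exact hul
        have hb : u (2*k+2) (Sum.inr l) < 1 :=
          lt_of_le_of_lt (hu_anti (by omega) _) hul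
        have e1 : u (2*(k+1)+1) (Sum.inr i) =
            Λ i i * ∑ l', (W2 i l' * u (2*k+2) (Sum.inl l') + W1 i l' * u (2*k+2) (Sum.inr l')) := by
          rw [show 2*(k+1)+1 = (2*k+2)+1 by ring, hu_succ, hmul_inr]
        have hterm_le : ∀ l', W2 i l' * u (2*k+2) (Sum.inl l') + W1 i l' * u (2*k+2) (Sum.inr l')
            ≤ S i l' := by
          intro l'
          have t1 := hu_le_one (2*k+2) (Sum.inl l')
          have t2 := hu_le_one (2*k+2) (Sum.inr l')
          have := mul_le_mul_of_nonneg_left t1 (hW2 i l')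
          have := mul_le_mul_of_nonneg_left t2 (hW1 i l')
          rw [hS, Matrix.add_apply]
          linarith
        have hterm_lt : W2 i l * u (2*k+2) (Sum.inl l) + W1 i l * u (2*k+2) (Sum.inr l)
            < S i l := by
          have hpos' : 0 < W1 i l ∨ 0 < W2 i l := by
            by_contra hno
            push_neg at hno
            have e1 : W1 i l = 0 := le_antisymm hno.1 (hW1 i l)
            have e2 : W2 i l = 0 := le_antisymm hno.2 (hW2 i l)
            rw [hS, Matrix.add_apply, e1, e2] at hSil
            norm_num at hSil
          rw [hS, Matrix.add_apply]
          rcases hpos' with h | h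
          · have s1 : W1 i l * u (2*k+2) (Sum.inr l) < W1 i l * 1 :=
              mul_lt_mul_of_pos_left hb h
            have s2 : W2 i l * u (2*k+2) (Sum.inl l) ≤ W2 i l * 1 :=
              mul_le_mul_of_nonneg_left ha.le (hW2 i l)
            linarith
          · have s1 : W2 i l * u (2*k+2) (Sum.inl l) < W2 i l * 1 :=
              mul_lt_mul_of_pos_left ha h
            have s2 : W1 i l * u (2*k+2) (Sum.inr l) ≤ W1 i l * 1 :=
              mul_le_mul_of_nonneg_left hb.le (hW1 i l)
            linarith
        have hsum_lt : ∑ l', (W2 i l' * u (2*k+2) (Sum.inl l') + W1 i l' * u (2*k+2) (Sum.inr l'))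
            < 1 := by
          rw [← hrow i]
          exact Finset.sum_lt_sum (fun l' _ => hterm_le l') ⟨l, Finset.mem_univ l, hterm_lt⟩
        have hsum_nonneg : 0 ≤ ∑ l', (W2 i l' * u (2*k+2) (Sum.inl l')
            + W1 i l' * u (2*k+2) (Sum.inr l')) :=
          Finset.sum_nonneg fun l' _ => add_nonneg
            (mul_nonneg (hW2 i l') (hu_nonneg _ _)) (mul_nonneg (hW1 i l') (hu_nonneg _ _))
        rw [e1]
        calc Λ i i * ∑ l', (W2 i l' * u (2*k+2) (Sum.inl l') + W1 i l' * u (2*k+2) (Sum.inr l'))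
            ≤ 1 * ∑ l', (W2 i l' * u (2*k+2) (Sum.inl l') + W1 i l' * u (2*k+2) (Sum.inr l')) :=
              mul_le_mul_of_nonneg_right (hΛ1 i) hsum_nonneg
          _ < 1 := by rw [one_mul]; exact hsum_lt
    have hex : ∀ i, ∃ m, u m (Sum.inr i) < 1 := by
      intro i
      obtain ⟨k, j, hj, hpos⟩ := hreach i
      exact ⟨2*k+1, hkey k i j hpos hj⟩
    choose f hf using hex
    set N := Finset.univ.sup f with hN
    have hfN : ∀ i, f i ≤ N := fun i => Finset.le_sup (Finset.mem_univ i)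
    have hlt_all : ∀ p, u (N+1) p < 1 := by
      rintro (i | i)
      · rw [hu_succ, hmul_inl]
        exact lt_of_le_of_lt (hu_anti (hfN i) _) (hf i)
      · exact lt_of_le_of_lt (hu_anti ((hfN i).trans (Nat.le_succ N)) _) (hf i)
    have hnorm : ‖((A ^ (N+1)).map Complex.ofReal)‖ < 1 := by
      rw [Matrix.linfty_opNorm_def, ← NNReal.coe_one, NNReal.coe_lt_coe]
      rw [Finset.sup_lt_iff (by norm_num : (⊥ : NNReal) < 1)]
      intro p _
      rw [← NNReal.coe_lt_coe, NNReal.coe_one, NNReal.coe_sum]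
      have he : ∀ q, ((‖((A ^ (N+1)).map Complex.ofReal) p q‖₊ : NNReal) : ℝ)
          = (A ^ (N+1)) p q := by
        intro q
        rw [coe_nnnorm, Matrix.map_apply, Complex.norm_real, Real.norm_eq_abs]
        exact abs_of_nonneg (hApow (N+1) p q)
      rw [Finset.sum_congr rfl fun q _ => he q, hu_rowsum]
      exact hlt_all p
    exact specRad_lt_one_of_pow A (N+1) (Nat.succ_pos N) hnorm
end

section
/- If all diagonal entries of Λ satisfy λ_ii < 1 (i.e., Λ < I), then ρ(Λ(W^(1)+W^(2))) < 1 and the FJ-MM dynamics is exponentially stable, i.e., ρ(Ā_d) < 1 for the block matrix Ā_d = [[0, I],[Λ W^(2), Λ W^(1)]]. -/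
open Matrix

lemma exists_eigvec {m : Type*} [Fintype m] [DecidableEq m] (M : Matrix m m ℂ) {z : ℂ}
    (hz : z ∈ spectrum ℂ M) : ∃ v : m → ℂ, v ≠ 0 ∧ M.mulVec v = z • v := by
  rw [← AlgEquiv.spectrum_eq (Matrix.toLinAlgEquiv' : Matrix m m ℂ ≃ₐ[ℂ] _) M] at hz
  have h := Module.End.hasEigenvalue_iff_mem_spectrum.mpr hz
  obtain ⟨v, hv⟩ := h.exists_hasEigenvector
  refine ⟨v, hv.2, ?_⟩
  have := Module.End.mem_eigenspace_iff.mp hv.1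
  simpa [Matrix.toLinAlgEquiv'_apply] using this

lemma specRad_lt_one {m : Type*} [Fintype m] [DecidableEq m] (M : Matrix m m ℝ)
    (h : ∀ z ∈ spectrum ℂ (M.map Complex.ofReal), ‖z‖ < 1) :
    specRad M < 1 := by
  unfold specRad
  rcases Set.eq_empty_or_nonempty (spectrum ℂ (M.map Complex.ofReal)) with he | hne
  · rw [he]; simp [Real.sSup_empty]
  · have hfin : ((fun z : ℂ => ‖z‖) '' spectrum ℂ (M.map Complex.ofReal)).Finite :=
      (Matrix.finite_spectrum _).image _
    rw [hfin.csSup_lt_iff (hne.image _)]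
    rintro x ⟨z, hz, rfl⟩
    exact h z hz
-- helper for rows of diagonal * matrix
section helpers
variable {n : ℕ}

lemma diag_mul_apply (Λ A : Matrix (Fin n) (Fin n) ℝ)
    (hΛdiag : ∀ i j, i ≠ j → Λ i j = 0) (i j : Fin n) :
    (Λ * A) i j = Λ i i * A i j := by
  rw [Matrix.mul_apply]
  exact Finset.sum_eq_single i (fun k _ hk => by rw [hΛdiag i k (Ne.symm hk), zero_mul])
    (fun h => absurd (Finset.mem_univ i) h)

end helpers

/-- **If `Λ < I` then the FJ-MM model is exponentially stable (Theorem 1, last part of (iii)).**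
If all susceptibilities satisfy `λ_ii < 1`, then `ρ(Λ(W¹+W²)) < 1` and
`ρ(Ā_d) < 1` for `Ā_d = [[0, I], [ΛW², ΛW¹]]`. -/
theorem fjmm_schur_stable_of_all_susceptible
    (n : ℕ) (Λ W1 W2 : Matrix (Fin n) (Fin n) ℝ)
    (hΛdiag : ∀ i j, i ≠ j → Λ i j = 0)
    (hΛ : ∀ i, Λ i i ∈ Set.Icc (0:ℝ) 1)
    (hW1 : ∀ i j, 0 ≤ W1 i j) (hW2 : ∀ i j, 0 ≤ W2 i j)
    (hrow : ∀ i, ∑ j, (W1 + W2) i j = 1)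
    (hΛlt : ∀ i, Λ i i < 1) :
    specRad (Λ * (W1 + W2)) < 1 ∧
      specRad (Matrix.fromBlocks (0 : Matrix (Fin n) (Fin n) ℝ) (1 : Matrix (Fin n) (Fin n) ℝ)
        (Λ * W2) (Λ * W1)) < 1 := by
  constructor
  · apply specRad_lt_one
    intro z hz
    obtain ⟨v, hv0, hvz⟩ := exists_eigvec _ hz
    obtain ⟨i0, hi0⟩ := Function.ne_iff.mp hv0
    obtain ⟨i, -, hi⟩ := Finset.exists_max_image Finset.univ (fun i => ‖v i‖)
      ⟨i0, Finset.mem_univ i0⟩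
    have hvi : 0 < ‖v i‖ :=
      lt_of_lt_of_le (by simpa using hi0) (hi i0 (Finset.mem_univ i0))
    have h1 : z * v i = ∑ j, ((Λ * (W1 + W2)) i j : ℂ) * v j := by
      have := congrFun hvz i
      simpa [Matrix.mulVec, dotProduct, Matrix.map_apply, mul_comm] using this.symm
    have hkey : ‖z‖ * ‖v i‖ ≤ Λ i i * ‖v i‖ := by
      calc ‖z‖ * ‖v i‖ = ‖z * v i‖ := (norm_mul _ _).symm
        _ = ‖∑ j, ((Λ * (W1 + W2)) i j : ℂ) * v j‖ := by rw [h1]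
        _ ≤ ∑ j, ‖((Λ * (W1 + W2)) i j : ℂ) * v j‖ :=
            norm_sum_le _ _
        _ = ∑ j, Λ i i * (W1 + W2) i j * ‖v j‖ := by
            refine Finset.sum_congr rfl fun j _ => ?_
            rw [norm_mul, Complex.norm_real, Real.norm_eq_abs, diag_mul_apply Λ _ hΛdiag,
              abs_of_nonneg (mul_nonneg (hΛ i).1 (by simpa using add_nonneg (hW1 i j) (hW2 i j)))]
        _ ≤ ∑ j, Λ i i * (W1 + W2) i j * ‖v i‖ :=
            Finset.sum_le_sum fun j _ =>
              mul_le_mul_of_nonneg_left (hi j (Finset.mem_univ j))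
                (mul_nonneg (hΛ i).1 (by simpa using add_nonneg (hW1 i j) (hW2 i j)))
        _ = Λ i i * ‖v i‖ := by
            rw [← Finset.sum_mul, ← Finset.mul_sum, hrow i, mul_one]
    have := (mul_le_mul_iff_left₀ hvi).mp hkey
    exact lt_of_le_of_lt this (hΛlt i)
  · apply specRad_lt_one
    intro z hz
    rw [show ((Matrix.fromBlocks (0 : Matrix (Fin n) (Fin n) ℝ) 1 (Λ * W2) (Λ * W1)).map
        Complex.ofReal) = Matrix.fromBlocks 0 1 ((Λ * W2).map Complex.ofReal)
        ((Λ * W1).map Complex.ofReal) by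
      rw [Matrix.fromBlocks_map, Matrix.map_zero _ Complex.ofReal_zero,
        Matrix.map_one _ Complex.ofReal_zero Complex.ofReal_one]] at hz
    obtain ⟨v, hv0, hvz⟩ := exists_eigvec _ hz
    set x : Fin n → ℂ := v ∘ Sum.inl with hxdef
    set y : Fin n → ℂ := v ∘ Sum.inr with hydef
    rw [Matrix.fromBlocks_mulVec] at hvz
    have htop : ∀ i, y i = z * x i := by
      intro i
      have := congrFun hvz (Sum.inl i)
      simpa [Matrix.mulVec, dotProduct, hxdef, hydef] using this
    have hbot : ∀ i, ((Λ * W2).map Complex.ofReal).mulVec x i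
        + ((Λ * W1).map Complex.ofReal).mulVec y i = z * y i := by
      intro i
      have := congrFun hvz (Sum.inr i)
      simpa [hxdef, hydef] using this
    have hx0 : x ≠ 0 := by
      intro h
      apply hv0
      funext k
      cases k with
      | inl i => exact congrFun h i
      | inr i =>
          have h2 := htop i
          rw [congrFun h i] at h2
          simpa [hydef] using h2
    obtain ⟨i0, hi0⟩ := Function.ne_iff.mp hx0
    obtain ⟨i, -, hi⟩ := Finset.exists_max_image Finset.univ (fun i => ‖x i‖)
      ⟨i0, Finset.mem_univ i0⟩
    have hxi : 0 < ‖x i‖ :=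
      lt_of_lt_of_le (by simpa using hi0) (hi i0 (Finset.mem_univ i0))
    by_contra hcon
    push_neg at hcon
    have hz1 : (1:ℝ) ≤ ‖z‖ := hcon
    have hzpos : 0 < ‖z‖ := lt_of_lt_of_le one_pos hz1
    -- main equation at row i
    have heq : z * z * x i = ∑ j, ((Λ * W2) i j : ℂ) * x j
        + ∑ j, ((Λ * W1) i j : ℂ) * (z * x j) := by
      have h := hbot i
      rw [htop i] at h
      have h2 : ((Λ * W2).map Complex.ofReal).mulVec x i = ∑ j, ((Λ * W2) i j : ℂ) * x j := by
        simp [Matrix.mulVec, dotProduct, Matrix.map_apply]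
      have h1' : ((Λ * W1).map Complex.ofReal).mulVec y i
          = ∑ j, ((Λ * W1) i j : ℂ) * (z * x j) := by
        simp only [Matrix.mulVec, dotProduct, Matrix.map_apply]
        exact Finset.sum_congr rfl fun j _ => by rw [htop j]
      rw [h2, h1', ← mul_assoc] at h
      exact h.symm
    have habs : ‖z‖ * ‖z‖ * ‖x i‖
        ≤ Λ i i * ((∑ j, W2 i j) + ‖z‖ * ∑ j, W1 i j) * ‖x i‖ := by
      calc ‖z‖ * ‖z‖ * ‖x i‖
          = ‖z * z * x i‖ := by
            rw [norm_mul, norm_mul]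
        _ = ‖∑ j, ((Λ * W2) i j : ℂ) * x j
            + ∑ j, ((Λ * W1) i j : ℂ) * (z * x j)‖ := by rw [heq]
        _ ≤ ‖∑ j, ((Λ * W2) i j : ℂ) * x j‖
            + ‖∑ j, ((Λ * W1) i j : ℂ) * (z * x j)‖ := norm_add_le _ _
        _ ≤ (∑ j, ‖((Λ * W2) i j : ℂ) * x j‖)
            + ∑ j, ‖((Λ * W1) i j : ℂ) * (z * x j)‖ :=
            add_le_add (norm_sum_le _ _) (norm_sum_le _ _)
        _ ≤ (∑ j, Λ i i * W2 i j * ‖x i‖)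
            + ∑ j, Λ i i * W1 i j * (‖z‖ * ‖x i‖) := by
            refine add_le_add (Finset.sum_le_sum fun j _ => ?_)
              (Finset.sum_le_sum fun j _ => ?_)
            · rw [norm_mul, Complex.norm_real, Real.norm_eq_abs, diag_mul_apply Λ _ hΛdiag,
                abs_of_nonneg (mul_nonneg (hΛ i).1 (hW2 i j))]
              exact mul_le_mul_of_nonneg_left (hi j (Finset.mem_univ j))
                (mul_nonneg (hΛ i).1 (hW2 i j))
            · rw [norm_mul, Complex.norm_real, Real.norm_eq_abs, diag_mul_apply Λ _ hΛdiag,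
                abs_of_nonneg (mul_nonneg (hΛ i).1 (hW1 i j)), norm_mul]
              exact mul_le_mul_of_nonneg_left
                (mul_le_mul_of_nonneg_left (hi j (Finset.mem_univ j)) (norm_nonneg z))
                (mul_nonneg (hΛ i).1 (hW1 i j))
        _ = Λ i i * ((∑ j, W2 i j) + ‖z‖ * ∑ j, W1 i j) * ‖x i‖ := by
            have e1 : ∑ j, Λ i i * W2 i j * ‖x i‖
                = Λ i i * (∑ j, W2 i j) * ‖x i‖ := by
              rw [← Finset.sum_mul, ← Finset.mul_sum]
            have e2 : ∑ j, Λ i i * W1 i j * (‖z‖ * ‖x i‖)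
                = Λ i i * (∑ j, W1 i j) * (‖z‖ * ‖x i‖) := by
              rw [← Finset.sum_mul, ← Finset.mul_sum]
            rw [e1, e2]; ring
    have hsum : (∑ j, W2 i j) + ∑ j, W1 i j = 1 := by
      have := hrow i
      simp only [Matrix.add_apply] at this
      rw [← this, Finset.sum_add_distrib]; ring
    have hW1s : 0 ≤ ∑ j, W1 i j := Finset.sum_nonneg fun j _ => hW1 i j
    have hW2s : 0 ≤ ∑ j, W2 i j := Finset.sum_nonneg fun j _ => hW2 i j
    have hfac : (∑ j, W2 i j) + ‖z‖ * ∑ j, W1 i j ≤ ‖z‖ := by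
      calc (∑ j, W2 i j) + ‖z‖ * ∑ j, W1 i j
          ≤ ‖z‖ * (∑ j, W2 i j) + ‖z‖ * ∑ j, W1 i j := by
            have := mul_le_mul_of_nonneg_right hz1 hW2s
            linarith
        _ = ‖z‖ * ((∑ j, W2 i j) + ∑ j, W1 i j) := by ring
        _ = ‖z‖ := by rw [hsum, mul_one]
    have hΛ0 : 0 ≤ Λ i i := (hΛ i).1
    have hstep : ‖z‖ * ‖z‖ * ‖x i‖
        ≤ Λ i i * ‖z‖ * ‖x i‖ := by
      refine le_trans habs ?_
      exact mul_le_mul_of_nonneg_right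
        (mul_le_mul_of_nonneg_left hfac hΛ0) (norm_nonneg _)
    have h2 : ‖z‖ ≤ Λ i i := by
      have := (mul_le_mul_iff_left₀ hxi).mp hstep
      have := (mul_le_mul_iff_right₀ hzpos).mp (by
        calc ‖z‖ * ‖z‖ ≤ Λ i i * ‖z‖ := this
          _ = ‖z‖ * Λ i i := by ring)
      exact this
    linarith [hΛlt i, hz1]
end

section
/- Suppose ρ(Ā) < 1 where Ā = Λ(W^(1)+W^(2)). Then I − Ā is invertible, the vector x̄ = (I−Ā)^{-1}(I−Λ)s is the unique solution of x = Ā x + (I−Λ)s, and every solution x(t) of the FJ-MM recursion x(t+1) = Λ(W^(1) x(t) + W^(2) x(t−1)) + (I−Λ)s, for any initial data x(−1), x(0), converges to x̄ as t → ∞. -/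
open Matrix Filter

namespace FJMMaux

attribute [local instance] Matrix.linftyOpNormedRing Matrix.linftyOpNormedAlgebra

variable {ι : Type*} [Fintype ι] [DecidableEq ι]

lemma entry_le_nnnorm (B : Matrix ι ι ℂ) (i j : ι) : ‖B i j‖₊ ≤ ‖B‖₊ := by
  rw [Matrix.linfty_opNNNorm_def]
  exact le_trans (Finset.single_le_sum (f := fun j => ‖B i j‖₊)
    (fun _ _ => zero_le) (Finset.mem_univ j))
    (Finset.le_sup (f := fun i => ∑ j, ‖B i j‖₊) (Finset.mem_univ i))

lemma pow_dom {A : Matrix ι ι ℝ} {B : Matrix ι ι ℂ}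
    (hA : ∀ i j, 0 ≤ A i j) (h : ∀ i j, ‖B i j‖ ≤ A i j) (k : ℕ) :
    ∀ i j, ‖(B ^ k) i j‖ ≤ (A ^ k) i j ∧ 0 ≤ (A ^ k) i j := by
  induction k with
  | zero =>
    intro i j
    simp only [pow_zero, Matrix.one_apply]
    by_cases hij : i = j <;> simp [hij]
  | succ k ih =>
    intro i j
    rw [pow_succ, pow_succ, Matrix.mul_apply, Matrix.mul_apply]
    constructor
    · refine le_trans (norm_sum_le _ _) (Finset.sum_le_sum fun l _ => ?_)
      rw [norm_mul]
      exact mul_le_mul (ih i l).1 (h l j) (norm_nonneg _) (ih i l).2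
    · exact Finset.sum_nonneg fun l _ => mul_nonneg (ih i l).2 (hA l j)

lemma norm_pow_dom {A : Matrix ι ι ℝ} {B : Matrix ι ι ℂ}
    (hA : ∀ i j, 0 ≤ A i j) (h : ∀ i j, ‖B i j‖ ≤ A i j) (k : ℕ) :
    ‖B ^ k‖₊ ≤ ‖(A.map Complex.ofReal) ^ k‖₊ := by
  have hmap : (A.map Complex.ofReal) ^ k = (A ^ k).map Complex.ofReal := by
    have := map_pow (Complex.ofRealHom.mapMatrix) A k
    simpa [RingHom.mapMatrix_apply, (show (⇑Complex.ofRealHom) = Complex.ofReal from rfl)] using this.symm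
  rw [hmap, Matrix.linfty_opNNNorm_def, Matrix.linfty_opNNNorm_def]
  refine Finset.sup_mono_fun fun i _ => Finset.sum_le_sum fun j _ => ?_
  have h1 := (pow_dom hA h k i j).1
  have h2 := (pow_dom hA h k i j).2
  rw [← NNReal.coe_le_coe]
  simpa [Matrix.map_apply, Complex.norm_real, abs_of_nonneg h2] using h1

lemma specRadius_dom {A : Matrix ι ι ℝ} {B : Matrix ι ι ℂ}
    (hA : ∀ i j, 0 ≤ A i j) (h : ∀ i j, ‖B i j‖ ≤ A i j) :
    spectralRadius ℂ B ≤ spectralRadius ℂ (A.map Complex.ofReal) := by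
  refine le_of_tendsto_of_tendsto'
    (spectrum.pow_nnnorm_pow_one_div_tendsto_nhds_spectralRadius B)
    (spectrum.pow_nnnorm_pow_one_div_tendsto_nhds_spectralRadius (A.map Complex.ofReal))
    fun k => ?_
  exact ENNReal.rpow_le_rpow (by exact_mod_cast norm_pow_dom hA h k) (by positivity)

lemma tendsto_pow_entry_zero {M : Matrix ι ι ℝ}
    (h : spectralRadius ℂ (M.map Complex.ofReal) < 1) (i j : ι) :
    Tendsto (fun k : ℕ => (M ^ k) i j) atTop (nhds 0) := by
  set B := M.map Complex.ofReal with hB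
  obtain ⟨r, hr1, hr2⟩ := ENNReal.lt_iff_exists_nnreal_btwn.mp h
  have hg := spectrum.pow_nnnorm_pow_one_div_tendsto_nhds_spectralRadius B
  have hev : ∀ᶠ k : ℕ in atTop, (‖B ^ k‖₊ : ENNReal) ^ (1 / (k:ℝ)) < (r : ENNReal) :=
    hg.eventually_lt_const hr1
  have hev2 : ∀ᶠ k : ℕ in atTop, ‖B ^ k‖ ≤ (r : ℝ) ^ k := by
    filter_upwards [hev, eventually_ge_atTop 1] with k hk hk1
    have hkpos : (0:ℝ) < k := by exact_mod_cast hk1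
    have : ((‖B ^ k‖₊ : ENNReal) ^ (1 / (k:ℝ))) ^ (k : ℝ) < ((r:ENNReal)) ^ (k:ℝ) :=
      ENNReal.rpow_lt_rpow hk hkpos
    rw [← ENNReal.rpow_mul, one_div, inv_mul_cancel₀ (ne_of_gt hkpos), ENNReal.rpow_one,
      ENNReal.rpow_natCast, ← ENNReal.coe_pow] at this
    have := (ENNReal.coe_lt_coe.mp this).le
    exact_mod_cast this
  have hlim : Tendsto (fun k : ℕ => (r:ℝ) ^ k) atTop (nhds 0) :=
    tendsto_pow_atTop_nhds_zero_of_lt_one r.coe_nonneg (by exact_mod_cast hr2)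
  have hMk : ∀ k : ℕ, ‖(M ^ k) i j‖ ≤ ‖B ^ k‖ := by
    intro k
    have hmap : B ^ k = (M ^ k).map Complex.ofReal := by
      have := map_pow (Complex.ofRealHom.mapMatrix) M k
      simpa [RingHom.mapMatrix_apply, (show (⇑Complex.ofRealHom) = Complex.ofReal from rfl)] using this.symm
    have := entry_le_nnnorm (B ^ k) i j
    rw [hmap] at this
    have : ‖((M ^ k).map Complex.ofReal) i j‖ ≤ ‖B ^ k‖ := by
      rw [hmap]; exact_mod_cast this
    simpa [Matrix.map_apply, Complex.norm_real] using this
  refine squeeze_zero_norm' ?_ hlim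
  filter_upwards [hev2] with k hk using le_trans (hMk k) hk

lemma mem_spectrum_iff_det {M : Matrix ι ι ℂ} {z : ℂ} :
    z ∈ spectrum ℂ M ↔ (z • (1 : Matrix ι ι ℂ) - M).det = 0 := by
  rw [spectrum.mem_iff, Matrix.isUnit_iff_isUnit_det, isUnit_iff_ne_zero, not_ne_iff,
    Algebra.algebraMap_eq_smul_one]

lemma specRadius_lt_one {M : Matrix ι ι ℝ} (h : specRad M < 1) :
    spectralRadius ℂ (M.map Complex.ofReal) < 1 := by
  have hb : BddAbove ((fun z : ℂ => ‖z‖) '' spectrum ℂ (M.map Complex.ofReal)) :=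
    ((Matrix.finite_spectrum _).image _).bddAbove
  calc spectralRadius ℂ (M.map Complex.ofReal)
      ≤ ENNReal.ofReal (specRad M) := by
        rw [spectralRadius]
        refine iSup₂_le fun z hz => ?_
        have h1 : ‖z‖ ≤ specRad M := le_csSup hb ⟨z, hz, rfl⟩
        have h2 : ENNReal.ofReal ‖z‖ ≤ ENNReal.ofReal (specRad M) := ENNReal.ofReal_le_ofReal h1
        rw [ofReal_norm] at h2
        exact h2
    _ < 1 := by
        rw [← ENNReal.ofReal_one]
        exact (ENNReal.ofReal_lt_ofReal_iff (by norm_num)).mpr h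

lemma companion_eig_lt_one {A1 A2 : Matrix ι ι ℝ}
    (h1 : ∀ i j, 0 ≤ A1 i j) (h2 : ∀ i j, 0 ≤ A2 i j)
    (hρ : spectralRadius ℂ ((A1 + A2).map Complex.ofReal) < 1)
    {z : ℂ} (hz : z ∈ spectrum ℂ
      (((Matrix.fromBlocks A1 A2 1 0 : Matrix (ι ⊕ ι) (ι ⊕ ι) ℝ)).map Complex.ofReal)) :
    ‖z‖₊ < 1 := by
  by_contra hlt
  push_neg at hlt
  have hz1 : (1 : ℝ) ≤ ‖z‖ := by exact_mod_cast hlt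
  have hz0 : z ≠ 0 := by
    intro h0; rw [h0] at hz1; simp at hz1; linarith
  set B1 := A1.map Complex.ofReal with hB1
  set B2 := A2.map Complex.ofReal with hB2
  have hCmap : ((Matrix.fromBlocks A1 A2 1 0 : Matrix (ι ⊕ ι) (ι ⊕ ι) ℝ)).map Complex.ofReal
      = Matrix.fromBlocks B1 B2 (1 : Matrix ι ι ℂ) (0 : Matrix ι ι ℂ) := by
    rw [Matrix.fromBlocks_map, Matrix.map_one _ Complex.ofReal_zero Complex.ofReal_one,
      Matrix.map_zero _ Complex.ofReal_zero]
  rw [hCmap, mem_spectrum_iff_det] at hz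
  have hblocks : z • (1 : Matrix (ι ⊕ ι) (ι ⊕ ι) ℂ) - Matrix.fromBlocks B1 B2 1 0
      = Matrix.fromBlocks (z • 1 - B1) (-B2) (-1) (z • 1) := by
    ext i j
    rcases i with i | i <;> rcases j with j | j <;>
      simp [Matrix.sub_apply, Matrix.smul_apply, Matrix.one_apply, Sum.inl.injEq,
        Sum.inr.injEq, sub_eq_add_neg]
  rw [hblocks] at hz
  letI : Invertible (z • (1 : Matrix ι ι ℂ)) :=
    ⟨z⁻¹ • 1, by simp [smul_smul, inv_mul_cancel₀ hz0, mul_inv_cancel₀ hz0],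
      by simp [smul_smul, inv_mul_cancel₀ hz0, mul_inv_cancel₀ hz0]⟩
  rw [Matrix.det_fromBlocks₂₂] at hz
  have hinv : ⅟(z • (1 : Matrix ι ι ℂ)) = z⁻¹ • 1 := rfl
  have hdetz : (z • (1 : Matrix ι ι ℂ)).det ≠ 0 := by
    rw [Matrix.det_smul, Matrix.det_one, mul_one]
    exact pow_ne_zero _ hz0
  have hschur : ((z • 1 - B1) - (-B2) * ⅟(z • (1 : Matrix ι ι ℂ)) * (-1)).det = 0 := by
    rcases mul_eq_zero.mp hz with h | h
    · exact absurd h hdetz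
    · exact h
  have hexpr : (z • 1 - B1) - (-B2) * ⅟(z • (1 : Matrix ι ι ℂ)) * (-1)
      = z • 1 - (B1 + z⁻¹ • B2) := by
    rw [hinv]
    simp [Matrix.mul_smul, Matrix.neg_mul, Matrix.mul_neg, sub_sub]
  rw [hexpr] at hschur
  have hz' : z ∈ spectrum ℂ (B1 + z⁻¹ • B2) := mem_spectrum_iff_det.mpr hschur
  have hle : (‖z‖₊ : ENNReal) ≤ spectralRadius ℂ (B1 + z⁻¹ • B2) := by
    rw [spectralRadius]
    exact le_iSup₂ (f := fun k (_ : k ∈ spectrum ℂ (B1 + z⁻¹ • B2)) => (‖k‖₊ : ENNReal)) z hz'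
  have hdom : spectralRadius ℂ (B1 + z⁻¹ • B2)
      ≤ spectralRadius ℂ ((A1 + A2).map Complex.ofReal) := by
    refine specRadius_dom (fun i j => add_nonneg (h1 i j) (h2 i j)) fun i j => ?_
    have hzi : ‖z⁻¹‖ ≤ 1 := by
      rw [norm_inv]
      exact inv_le_one_of_one_le₀ hz1
    calc ‖(B1 + z⁻¹ • B2) i j‖
        ≤ ‖B1 i j‖ + ‖z⁻¹‖ * ‖B2 i j‖ := by
          rw [Matrix.add_apply, Matrix.smul_apply, smul_eq_mul]
          exact (norm_add_le _ _).trans (by rw [norm_mul])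
      _ ≤ A1 i j + A2 i j := by
          have e1 : ‖B1 i j‖ = A1 i j := by
            simp [hB1, Matrix.map_apply, Complex.norm_real, abs_of_nonneg (h1 i j)]
          have e2 : ‖B2 i j‖ = A2 i j := by
            simp [hB2, Matrix.map_apply, Complex.norm_real, abs_of_nonneg (h2 i j)]
          rw [e1, e2]
          have := mul_le_of_le_one_left (norm_nonneg (B2 i j)) hzi
          nlinarith [h2 i j, norm_nonneg (B2 i j)]
      _ = (A1 + A2) i j := (Matrix.add_apply _ _ _ _).symm
  have : (1 : ENNReal) ≤ spectralRadius ℂ ((A1 + A2).map Complex.ofReal) :=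
    le_trans (by exact_mod_cast hlt) (hle.trans hdom)
  exact absurd (lt_of_le_of_lt this hρ) (lt_irrefl _)

lemma companion_specRadius_lt [Nonempty ι] {A1 A2 : Matrix ι ι ℝ}
    (h1 : ∀ i j, 0 ≤ A1 i j) (h2 : ∀ i j, 0 ≤ A2 i j)
    (hρ : spectralRadius ℂ ((A1 + A2).map Complex.ofReal) < 1) :
    spectralRadius ℂ
      (((Matrix.fromBlocks A1 A2 1 0 : Matrix (ι ⊕ ι) (ι ⊕ ι) ℝ)).map Complex.ofReal) < 1 := by
  have hne : (spectrum ℂ (((Matrix.fromBlocks A1 A2 1 0 : Matrix (ι ⊕ ι) (ι ⊕ ι) ℝ)).map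
      Complex.ofReal)).Nonempty := spectrum.nonempty _
  have := spectrum.spectralRadius_lt_of_forall_lt_of_nonempty hne (r := 1)
    (fun z hz => companion_eig_lt_one h1 h2 hρ hz)
  simpa using this

end FJMMaux

/-- **Convergence of the FJ-MM model to the unique equilibrium (Theorem 1, final part).**
If `ρ(Ā) < 1` with `Ā = Λ(W¹+W²)`, then `I - Ā` is invertible,
`x̄ = (I-Ā)⁻¹(I-Λ)s` is the unique solution of `x = Āx + (I-Λ)s`, and every solution
of the FJ-MM recursion converges to `x̄`.  (The Lean sequence `x` is shifted by one:
`x 0 = x(-1)`, `x 1 = x(0)` are the arbitrary initial data.) -/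
theorem fjmm_convergence_to_equilibrium
    (n : ℕ) (Λ W1 W2 : Matrix (Fin n) (Fin n) ℝ)
    (hΛdiag : ∀ i j, i ≠ j → Λ i j = 0)
    (hΛ : ∀ i, Λ i i ∈ Set.Icc (0:ℝ) 1)
    (hW1 : ∀ i j, 0 ≤ W1 i j) (hW2 : ∀ i j, 0 ≤ W2 i j)
    (hrow : ∀ i, ∑ j, (W1 + W2) i j = 1)
    (s : Fin n → ℝ)
    (hρ : specRad (Λ * (W1 + W2)) < 1) :
    IsUnit (1 - Λ * (W1 + W2)) ∧
    (∀ y : Fin n → ℝ,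
        y = (Λ * (W1 + W2)).mulVec y + (1 - Λ).mulVec s ↔
        y = (1 - Λ * (W1 + W2))⁻¹.mulVec ((1 - Λ).mulVec s)) ∧
    (∀ x : ℕ → Fin n → ℝ,
        (∀ t, x (t+2) =
          Λ.mulVec (W1.mulVec (x (t+1)) + W2.mulVec (x t)) + (1 - Λ).mulVec s) →
        Tendsto x atTop
          (nhds ((1 - Λ * (W1 + W2))⁻¹.mulVec ((1 - Λ).mulVec s)))) := by
  classical
  set Abar := Λ * (W1 + W2) with hAbar
  have hsr : spectralRadius ℂ (Abar.map Complex.ofReal) < 1 := FJMMaux.specRadius_lt_one hρ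
  -- invertibility of 1 - Abar
  have hdet : (1 - Abar).det ≠ 0 := by
    intro h0
    have e : (1 - Abar).map Complex.ofReal = 1 - Abar.map Complex.ofReal := by
      have := map_sub (Complex.ofRealHom.mapMatrix) 1 Abar
      simpa [RingHom.mapMatrix_apply, (show (⇑Complex.ofRealHom) = Complex.ofReal from rfl)] using this
    have h1 : (1:ℂ) ∈ spectrum ℂ (Abar.map Complex.ofReal) := by
      rw [FJMMaux.mem_spectrum_iff_det, one_smul, ← e]
      have hd : ((1 - Abar).map Complex.ofReal).det = Complex.ofReal ((1 - Abar).det) := by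
        have := RingHom.map_det Complex.ofRealHom (1 - Abar)
        simpa [RingHom.mapMatrix_apply, (show (⇑Complex.ofRealHom) = Complex.ofReal from rfl)] using this.symm
      rw [hd, h0, Complex.ofReal_zero]
    have h2 : (1:ENNReal) ≤ spectralRadius ℂ (Abar.map Complex.ofReal) := by
      have := le_iSup₂
        (f := fun k (_ : k ∈ spectrum ℂ (Abar.map Complex.ofReal)) => (‖k‖₊ : ENNReal)) 1 h1
      rw [spectralRadius]
      simpa using this
    exact absurd (lt_of_le_of_lt h2 hsr) (lt_irrefl _)
  have hdetU : IsUnit (1 - Abar).det := isUnit_iff_ne_zero.mpr hdet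
  have hU : IsUnit (1 - Abar) := (Matrix.isUnit_iff_isUnit_det _).mpr hdetU
  have hNl : (1 - Abar)⁻¹ * (1 - Abar) = 1 := Matrix.nonsing_inv_mul _ hdetU
  have hNr : (1 - Abar) * (1 - Abar)⁻¹ = 1 := Matrix.mul_nonsing_inv _ hdetU
  have hiff : ∀ y : Fin n → ℝ,
      y = Abar.mulVec y + (1 - Λ).mulVec s ↔ y = (1 - Abar)⁻¹.mulVec ((1 - Λ).mulVec s) := by
    intro y
    constructor
    · intro h
      have h' : (1 - Abar).mulVec y = (1 - Λ).mulVec s := by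
        rw [Matrix.sub_mulVec, Matrix.one_mulVec]
        exact sub_eq_iff_eq_add'.mpr h
      calc y = (1 : Matrix (Fin n) (Fin n) ℝ).mulVec y := (Matrix.one_mulVec y).symm
        _ = ((1 - Abar)⁻¹ * (1 - Abar)).mulVec y := by rw [hNl]
        _ = (1 - Abar)⁻¹.mulVec ((1 - Abar).mulVec y) := (Matrix.mulVec_mulVec _ _ _).symm
        _ = (1 - Abar)⁻¹.mulVec ((1 - Λ).mulVec s) := by rw [h']
    · intro h
      have h' : (1 - Abar).mulVec y = (1 - Λ).mulVec s := by
        rw [h, Matrix.mulVec_mulVec, hNr, Matrix.one_mulVec]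
      rw [Matrix.sub_mulVec, Matrix.one_mulVec] at h'
      exact sub_eq_iff_eq_add'.mp h'
  refine ⟨hU, hiff, ?_⟩
  intro x hx
  set b := (1 - Λ).mulVec s with hb
  set xbar := (1 - Abar)⁻¹.mulVec b with hxbar
  rcases Nat.eq_zero_or_pos n with hn | hn
  · subst hn
    haveI : Subsingleton (Fin 0 → ℝ) := ⟨fun a b => funext fun i => i.elim0⟩
    exact tendsto_const_nhds.congr fun t => Subsingleton.elim _ _
  haveI : Nonempty (Fin n) := ⟨⟨0, hn⟩⟩
  set A1 := Λ * W1 with hA1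
  set A2 := Λ * W2 with hA2
  have hAsum : Abar = A1 + A2 := by rw [hAbar, hA1, hA2, mul_add]
  have hΛnn : ∀ i j, 0 ≤ Λ i j := by
    intro i j
    by_cases h : i = j
    · subst h; exact (hΛ i).1
    · rw [hΛdiag i j h]
  have hA1nn : ∀ i j, 0 ≤ A1 i j := by
    intro i j
    rw [hA1, Matrix.mul_apply]
    exact Finset.sum_nonneg fun k _ => mul_nonneg (hΛnn i k) (hW1 k j)
  have hA2nn : ∀ i j, 0 ≤ A2 i j := by
    intro i j
    rw [hA2, Matrix.mul_apply]
    exact Finset.sum_nonneg fun k _ => mul_nonneg (hΛnn i k) (hW2 k j)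
  set C : Matrix (Fin n ⊕ Fin n) (Fin n ⊕ Fin n) ℝ := Matrix.fromBlocks A1 A2 1 0 with hC
  have hCsr : spectralRadius ℂ (C.map Complex.ofReal) < 1 := by
    rw [hC]
    exact FJMMaux.companion_specRadius_lt hA1nn hA2nn (by rw [← hAsum]; exact hsr)
  have hent : ∀ p q, Tendsto (fun t : ℕ => (C ^ t) p q) atTop (nhds 0) :=
    fun p q => FJMMaux.tendsto_pow_entry_zero hCsr p q
  have hfix : xbar = Abar.mulVec xbar + b := (hiff xbar).mpr rfl
  set e : ℕ → Fin n → ℝ := fun t => x t - xbar with he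
  have hx2 : ∀ t, x (t+2) = A1.mulVec (x (t+1)) + A2.mulVec (x t) + b := by
    intro t
    rw [hx t, Matrix.mulVec_add, Matrix.mulVec_mulVec, Matrix.mulVec_mulVec, ← hA1, ← hA2]
  have hxb : xbar = A1.mulVec xbar + A2.mulVec xbar + b := by
    nth_rewrite 1 [hfix]
    rw [hAsum, Matrix.add_mulVec]
  have herec : ∀ t, e (t+2) = A1.mulVec (e (t+1)) + A2.mulVec (e t) := by
    intro t
    show x (t+2) - xbar = A1.mulVec (x (t+1) - xbar) + A2.mulVec (x t - xbar)
    rw [hx2 t, Matrix.mulVec_sub, Matrix.mulVec_sub]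
    nth_rewrite 1 [hxb]
    abel
  set y : ℕ → (Fin n ⊕ Fin n) → ℝ := fun t => Sum.elim (e (t+1)) (e t) with hy
  have hystep : ∀ t, y (t+1) = C.mulVec (y t) := by
    intro t
    rw [hy, hC]
    show Sum.elim (e (t+2)) (e (t+1)) = _
    rw [Matrix.fromBlocks_mulVec]
    have h1 : (Sum.elim (e (t+1)) (e t) : (Fin n ⊕ Fin n) → ℝ) ∘ Sum.inl = e (t+1) :=
      Sum.elim_comp_inl _ _
    have h2 : (Sum.elim (e (t+1)) (e t) : (Fin n ⊕ Fin n) → ℝ) ∘ Sum.inr = e t :=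
      Sum.elim_comp_inr _ _
    rw [h1, h2, Matrix.one_mulVec, Matrix.zero_mulVec, add_zero, herec t]
  have hpow : ∀ t, y t = (C ^ t).mulVec (y 0) := by
    intro t
    induction t with
    | zero => rw [pow_zero, Matrix.one_mulVec]
    | succ t ih =>
      rw [hystep t, ih, Matrix.mulVec_mulVec, ← pow_succ']
  have hyto : ∀ p, Tendsto (fun t => y t p) atTop (nhds 0) := by
    intro p
    have hrep : ∀ t, y t p = ∑ q, (C ^ t) p q * (y 0 q) := by
      intro t
      rw [hpow t]
      simp [Matrix.mulVec, dotProduct]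
    rw [tendsto_congr hrep]
    have := tendsto_finset_sum (Finset.univ : Finset (Fin n ⊕ Fin n))
      (fun q _ => (hent p q).mul_const (y 0 q))
    simpa using this
  rw [tendsto_pi_nhds]
  intro i
  have h1 : Tendsto (fun t => e t i) atTop (nhds 0) := hyto (Sum.inr i)
  have h2 : Tendsto (fun t => e t i + xbar i) atTop (nhds (0 + xbar i)) :=
    h1.add_const _
  rw [zero_add] at h2
  refine h2.congr fun t => ?_
  show (x t - xbar) i + xbar i = x t i
  simp
end

section
/- Suppose ρ(Ā) < 1 where Ā = Λ(W^(1)+W^(2)). Then the 'control matrix' (I−Ā)^{-1}(I−Λ) is row-stochastic: it is entrywise nonnegative and each of its rows sums to 1. Consequently, each entry of the equilibrium opinion vector x̄ = (I−Ā)^{-1}(I−Λ)s is a convex combination of the innate opinions s_1, …, s_n. -/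
open Matrix Filter Finset

section Aux

attribute [local instance] Matrix.linftyOpNormedRing Matrix.linftyOpNormedAlgebra

private lemma entry_norm_le {n : ℕ} (M : Matrix (Fin n) (Fin n) ℂ) (i j : Fin n) :
    ‖M i j‖ ≤ ‖M‖ := by
  have h : ‖M i j‖₊ ≤ ‖M‖₊ := by
    rw [Matrix.linfty_opNNNorm_def]
    calc ‖M i j‖₊ ≤ ∑ l, ‖M i l‖₊ :=
          Finset.single_le_sum (f := fun l => ‖M i l‖₊) (fun l _ => zero_le) (mem_univ j)
      _ ≤ _ := Finset.le_sup (f := fun i => ∑ l, ‖M i l‖₊) (Finset.mem_univ i)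
  exact_mod_cast h

/-- Main analytic lemma: if all nonnegative `A` has `specRad A < 1` then `1 - A` is
invertible and its inverse is entrywise nonnegative. -/
private lemma inv_one_sub_nonneg {n : ℕ} (A : Matrix (Fin n) (Fin n) ℝ)
    (hA : ∀ i j, 0 ≤ A i j) (hρ : specRad A < 1) :
    IsUnit (1 - A).det ∧ ∀ i j, 0 ≤ (1 - A)⁻¹ i j := by
  rcases Nat.eq_zero_or_pos n with hn | hn
  · subst hn
    constructor
    · simp [Matrix.det_fin_zero]
    · exact fun i => Fin.elim0 i
  haveI : NeZero n := ⟨hn.ne'⟩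
  set Ac : Matrix (Fin n) (Fin n) ℂ := A.map Complex.ofReal with hAc
  have hmapmat : Ac = (Complex.ofRealHom.mapMatrix : Matrix (Fin n) (Fin n) ℝ →+* _) A := rfl
  -- all spectrum elements have modulus < 1
  have hbdd : BddAbove ((fun z : ℂ => ‖z‖) '' spectrum ℂ Ac) := by
    refine ⟨‖Ac‖, ?_⟩
    rintro x ⟨z, hz, rfl⟩
    exact spectrum.norm_le_norm_of_mem hz
  have hspec : ∀ z ∈ spectrum ℂ Ac, ‖z‖ < 1 := by
    intro z hz
    have hle : ‖z‖ ≤ specRad A := le_csSup hbdd ⟨z, hz, rfl⟩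
    exact lt_of_le_of_lt hle hρ
  -- invertibility of 1 - A
  have hone : (1:ℂ) ∉ spectrum ℂ Ac := fun h => by simpa using hspec 1 h
  rw [spectrum.notMem_iff] at hone
  have hUnitC : IsUnit (1 - Ac) := by simpa using hone
  have hdetC : IsUnit (1 - Ac).det := (Matrix.isUnit_iff_isUnit_det _).mp hUnitC
  have hmap1 : (1 : Matrix (Fin n) (Fin n) ℂ) - Ac
      = (Complex.ofRealHom.mapMatrix : Matrix (Fin n) (Fin n) ℝ →+* _) (1 - A) := by
    rw [_root_.map_sub, _root_.map_one, hmapmat]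
  have hdet : IsUnit (1 - A).det := by
    rw [hmap1, ← RingHom.map_det] at hdetC
    rw [isUnit_iff_ne_zero] at hdetC ⊢
    intro h
    exact hdetC (by simp [h])
  refine ⟨hdet, ?_⟩
  -- spectral radius < 1 in the mathlib sense
  have hsr : spectralRadius ℂ Ac < 1 := by
    have := spectrum.spectralRadius_lt_of_forall_lt Ac
      (r := 1) (fun z hz => by simpa using (show ‖z‖₊ < 1 from by rw [← NNReal.coe_lt_coe, coe_nnnorm, NNReal.coe_one]; exact hspec z hz))
    simpa using this
  -- Gelfand: obtain N ≥ 1 with ‖Ac ^ N‖ < 1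
  have hgel := spectrum.pow_nnnorm_pow_one_div_tendsto_nhds_spectralRadius Ac
  have hev : ∀ᶠ k : ℕ in atTop, (‖Ac ^ k‖₊ : ENNReal) ^ (1 / (k:ℝ)) < 1 :=
    hgel.eventually_lt_const hsr
  obtain ⟨N, hNlt, hN1⟩ := (hev.and (eventually_ge_atTop 1)).exists
  have hrN : ‖Ac ^ N‖ < 1 := by
    by_contra hge
    push_neg at hge
    have h1 : (1 : ENNReal) ≤ (‖Ac ^ N‖₊ : ENNReal) := by
      exact_mod_cast (by exact_mod_cast hge : (1:NNReal) ≤ ‖Ac ^ N‖₊)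
    have : (1:ENNReal) ≤ (‖Ac ^ N‖₊ : ENNReal) ^ (1 / (N:ℝ)) := by
      calc (1:ENNReal) = 1 ^ (1 / (N:ℝ)) := (ENNReal.one_rpow _).symm
        _ ≤ _ := ENNReal.rpow_le_rpow h1 (by positivity)
    exact absurd (lt_of_le_of_lt this hNlt) (lt_irrefl _)
  set r : ℝ := ‖Ac ^ N‖ with hr
  have hr0 : 0 ≤ r := norm_nonneg _
  -- powers of A are nonnegative
  have hpow : ∀ m, ∀ i j, 0 ≤ (A ^ m) i j := by
    intro m
    induction m with
    | zero => intro i j; by_cases h : i = j <;> simp [pow_zero, Matrix.one_apply, h]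
    | succ m ih =>
      intro i j
      rw [pow_succ, Matrix.mul_apply]
      exact Finset.sum_nonneg fun k _ => mul_nonneg (ih i k) (hA k j)
  -- geometric identity
  set B : Matrix (Fin n) (Fin n) ℝ := (1 - A)⁻¹ with hB
  have hBinv : B * (1 - A) = 1 := Matrix.nonsing_inv_mul _ hdet
  have hgeo : ∀ m : ℕ, B = (∑ k ∈ Finset.range m, A ^ k) + B * A ^ m := by
    intro m
    have hcomm : Commute A (∑ k ∈ Finset.range m, A ^ k) :=
      Commute.sum_right _ _ _ fun k _ => (Commute.refl A).pow_right k
    have h1 : (∑ k ∈ Finset.range m, A ^ k) * (1 - A) = 1 - A ^ m := by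
      have := geom_sum_mul A m
      calc (∑ k ∈ Finset.range m, A ^ k) * (1 - A)
          = -((∑ k ∈ Finset.range m, A ^ k) * (A - 1)) := by
            rw [← mul_neg, neg_sub]
        _ = 1 - A ^ m := by rw [this, neg_sub]
    have h2 : (1 - A) * (∑ k ∈ Finset.range m, A ^ k) = 1 - A ^ m := by
      have hc2 : (1 - A) * (∑ k ∈ Finset.range m, A ^ k)
          = (∑ k ∈ Finset.range m, A ^ k) * (1 - A) := by
        rw [sub_mul, mul_sub, one_mul, mul_one, hcomm.eq]
      rw [hc2, h1]
    calc B = B * 1 := (mul_one B).symm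
      _ = B * ((1 - A) * (∑ k ∈ Finset.range m, A ^ k) + A ^ m) := by
          rw [h2, sub_add_cancel]
      _ = (B * (1 - A)) * (∑ k ∈ Finset.range m, A ^ k) + B * A ^ m := by
          rw [mul_add, mul_assoc]
      _ = (∑ k ∈ Finset.range m, A ^ k) + B * A ^ m := by rw [hBinv, one_mul]
  -- entry bound for powers of A
  have hApowC : ∀ m : ℕ, Ac ^ m = (A ^ m).map Complex.ofReal := by
    intro m
    rw [hmapmat, ← map_pow]
    rfl
  have hentry : ∀ m i j, |(A ^ m) i j| ≤ ‖Ac ^ m‖ := by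
    intro m i j
    rw [hApowC]
    have := entry_norm_le ((A ^ m).map Complex.ofReal) i j
    rwa [Matrix.map_apply, Complex.norm_real, Real.norm_eq_abs] at this
  have hnormpow : ∀ t : ℕ, ‖Ac ^ (N * t)‖ ≤ r ^ t := by
    intro t
    rw [pow_mul]
    induction t with
    | zero => simp
    | succ t ih =>
      rw [pow_succ, pow_succ]
      calc ‖(Ac ^ N) ^ t * Ac ^ N‖ ≤ ‖(Ac ^ N) ^ t‖ * ‖Ac ^ N‖ := norm_mul_le _ _
        _ ≤ r ^ t * r := mul_le_mul ih le_rfl (norm_nonneg _) (pow_nonneg hr0 t)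
  -- conclude nonnegativity
  intro i j
  set C : ℝ := ∑ k, |B i k| with hC
  have hC0 : 0 ≤ C := Finset.sum_nonneg fun k _ => abs_nonneg _
  have hkey : ∀ t : ℕ, -(C * r ^ t) ≤ B i j := by
    intro t
    have hid := congrFun (congrFun (hgeo (N * t)) i) j
    rw [Matrix.add_apply] at hid
    have hS : 0 ≤ (∑ k ∈ Finset.range (N * t), A ^ k) i j := by
      rw [Matrix.sum_apply]
      exact Finset.sum_nonneg fun k _ => hpow k i j
    have hE : |(B * A ^ (N * t)) i j| ≤ C * r ^ t := by
      rw [Matrix.mul_apply]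
      calc |∑ k, B i k * (A ^ (N * t)) k j| ≤ ∑ k, |B i k * (A ^ (N * t)) k j| :=
            Finset.abs_sum_le_sum_abs _ _
        _ ≤ ∑ k, |B i k| * (r ^ t) := by
            refine Finset.sum_le_sum fun k _ => ?_
            rw [abs_mul]
            exact mul_le_mul le_rfl ((hentry (N * t) k j).trans (hnormpow t))
              (abs_nonneg _) (abs_nonneg _)
        _ = C * r ^ t := by rw [← Finset.sum_mul]
    have := neg_abs_le ((B * A ^ (N * t)) i j)
    calc -(C * r ^ t) ≤ (B * A ^ (N * t)) i j := by linarith [neg_le_neg hE]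
      _ ≤ B i j := by rw [hid]; linarith
  have hlim : Tendsto (fun t : ℕ => -(C * r ^ t)) atTop (nhds 0) := by
    have h1 : Tendsto (fun t : ℕ => r ^ t) atTop (nhds 0) :=
      tendsto_pow_atTop_nhds_zero_of_lt_one hr0 hrN
    have := (h1.const_mul C).neg
    simpa using this
  exact le_of_tendsto' hlim hkey

end Aux

/-- **The control matrix `(I-Ā)⁻¹(I-Λ)` is row-stochastic (footnote to Theorem 1).**
If `ρ(Ā) < 1` with `Ā = Λ(W¹+W²)`, then the control matrix is entrywise nonnegative,
each of its rows sums to `1`, and consequently each entry of the equilibrium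
`x̄ = (I-Ā)⁻¹(I-Λ)s` is a convex combination `∑_j c_{ij} s_j` of the innate opinions. -/
theorem fjmm_control_matrix_stochastic
    (n : ℕ) (Λ W1 W2 : Matrix (Fin n) (Fin n) ℝ)
    (hΛdiag : ∀ i j, i ≠ j → Λ i j = 0)
    (hΛ : ∀ i, Λ i i ∈ Set.Icc (0:ℝ) 1)
    (hW1 : ∀ i j, 0 ≤ W1 i j) (hW2 : ∀ i j, 0 ≤ W2 i j)
    (hrow : ∀ i, ∑ j, (W1 + W2) i j = 1)
    (s : Fin n → ℝ)
    (hρ : specRad (Λ * (W1 + W2)) < 1) :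
    (∀ i j, 0 ≤ ((1 - Λ * (W1 + W2))⁻¹ * (1 - Λ)) i j) ∧
    (∀ i, ∑ j, ((1 - Λ * (W1 + W2))⁻¹ * (1 - Λ)) i j = 1) ∧
    (∀ i, ((1 - Λ * (W1 + W2))⁻¹.mulVec ((1 - Λ).mulVec s)) i =
        ∑ j, ((1 - Λ * (W1 + W2))⁻¹ * (1 - Λ)) i j * s j) := by
  set A : Matrix (Fin n) (Fin n) ℝ := Λ * (W1 + W2) with hAdef
  have hΛnonneg : ∀ i k, 0 ≤ Λ i k := by
    intro i k
    by_cases h : i = k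
    · subst h; exact (hΛ i).1
    · rw [hΛdiag i k h]
  have hWnn : ∀ i j, 0 ≤ (W1 + W2) i j := fun i j =>
    add_nonneg (hW1 i j) (hW2 i j)
  have hAnn : ∀ i j, 0 ≤ A i j := by
    intro i j
    rw [hAdef, Matrix.mul_apply]
    exact Finset.sum_nonneg fun k _ => mul_nonneg (hΛnonneg i k) (hWnn k j)
  obtain ⟨hdet, hBnn⟩ := inv_one_sub_nonneg A hAnn hρ
  set B : Matrix (Fin n) (Fin n) ℝ := (1 - A)⁻¹ with hB
  have hBinv : B * (1 - A) = 1 := Matrix.nonsing_inv_mul _ hdet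
  -- (1 - Λ) is diagonal with entries 1 - Λ j j, and product entry formula
  have hdiagE : ∀ k j : Fin n, (1 - Λ) k j = if k = j then 1 - Λ j j else 0 := by
    intro k j
    by_cases h : k = j
    · subst h; simp [Matrix.sub_apply, Matrix.one_apply]
    · simp [Matrix.sub_apply, Matrix.one_apply, h, hΛdiag k j h]
  have hprodE : ∀ i j, (B * (1 - Λ)) i j = B i j * (1 - Λ j j) := by
    intro i j
    rw [Matrix.mul_apply]
    rw [Finset.sum_eq_single j]
    · rw [hdiagE j j, if_pos rfl]
    · intro k _ hk
      rw [hdiagE k j, if_neg hk, mul_zero]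
    · intro h; exact absurd (Finset.mem_univ j) h
  -- row sums of A
  have hArow : ∀ k, ∑ j, A k j = Λ k k := by
    intro k
    have : ∀ j, A k j = Λ k k * (W1 + W2) k j := by
      intro j
      rw [hAdef, Matrix.mul_apply, Finset.sum_eq_single k]
      · intro l _ hl; rw [hΛdiag k l (Ne.symm hl), zero_mul]
      · intro h; exact absurd (Finset.mem_univ k) h
    simp_rw [this, ← Finset.mul_sum, hrow k, mul_one]
  refine ⟨?_, ?_, ?_⟩
  · intro i j
    rw [hprodE]
    exact mul_nonneg (hBnn i j) (by linarith [(hΛ j).2])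
  · intro i
    have hrowsum : ∀ j, (1 : ℝ) - Λ j j = ∑ l, (1 - A) j l := by
      intro j
      have h1 : ∑ l, (1 : Matrix (Fin n) (Fin n) ℝ) j l = 1 := by
        simp [Matrix.one_apply]
      simp only [Matrix.sub_apply]
      rw [Finset.sum_sub_distrib, h1, hArow j]
    calc ∑ j, (B * (1 - Λ)) i j = ∑ j, B i j * (1 - Λ j j) := by
          simp_rw [hprodE]
      _ = ∑ j, B i j * ∑ l, (1 - A) j l := by simp_rw [← hrowsum]
      _ = ∑ j, ∑ l, B i j * (1 - A) j l := by simp_rw [Finset.mul_sum]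
      _ = ∑ l, ∑ j, B i j * (1 - A) j l := Finset.sum_comm
      _ = ∑ l, (B * (1 - A)) i l := by simp_rw [Matrix.mul_apply]
      _ = ∑ l, (1 : Matrix (Fin n) (Fin n) ℝ) i l := by rw [hBinv]
      _ = 1 := by simp [Matrix.one_apply]
  · intro i
    rw [Matrix.mulVec_mulVec]
    simp [Matrix.mulVec, dotProduct]
end

section
/- Let W and W̃ be row-stochastic n×n matrices, let β ∈ ℝ^n have entries β_i ∈ (0,1), and set W^(1) = (I−[β])W and W^(2) = [β]W̃, where [β] denotes the diagonal matrix with diagonal β. If ρ(ΛW) < 1 or ρ(ΛW̃) < 1, then ρ(Ā_d) < 1 for the block matrix Ā_d = [[0, I],[Λ W^(2), Λ W^(1)]]; equivalently, the FJ-MM model and its comparison FJ model with matrix W^(1)+W^(2) are Schur stable. -/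
open Matrix

attribute [local instance] Matrix.linftyOpNormedRing Matrix.linftyOpNormedAlgebra
  Matrix.linftyOpNormedSpace

section Aux

variable {κ : Type*} [Fintype κ] [DecidableEq κ]

lemma pow_entry_nonneg_s10 (D : Matrix κ κ ℝ) (hD : ∀ i j, 0 ≤ D i j) (k : ℕ) :
    ∀ i j, 0 ≤ (D ^ k) i j := by
  induction k with
  | zero => intro i j; rw [pow_zero, Matrix.one_apply]; split <;> norm_num
  | succ k ih =>
    intro i j
    rw [pow_succ, Matrix.mul_apply]
    exact Finset.sum_nonneg fun l _ => mul_nonneg (ih i l) (hD l j)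

lemma rowsum_pow_le_one (D : Matrix κ κ ℝ) (hD : ∀ i j, 0 ≤ D i j)
    (hrow : ∀ i, ∑ j, D i j ≤ 1) (k : ℕ) : ∀ i, ∑ j, (D ^ k) i j ≤ 1 := by
  induction k with
  | zero => intro i; simp [Matrix.one_apply]
  | succ k ih =>
    intro i
    rw [pow_succ']
    calc ∑ j, (D * D ^ k) i j = ∑ l, D i l * ∑ j, (D ^ k) l j := by
          simp only [Matrix.mul_apply]
          rw [Finset.sum_comm]
          simp [Finset.mul_sum]
      _ ≤ ∑ l, D i l * 1 := by
          refine Finset.sum_le_sum fun l _ => ?_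
          exact mul_le_mul_of_nonneg_left (ih l) (hD i l)
      _ ≤ 1 := by simpa using hrow i

lemma rowsum_pow_add (D : Matrix κ κ ℝ) (k m : ℕ) (i : κ) :
    ∑ j, (D ^ (k + m)) i j = ∑ l, (D ^ k) i l * ∑ j, (D ^ m) l j := by
  rw [pow_add]
  simp only [Matrix.mul_apply]
  rw [Finset.sum_comm]
  simp [Finset.mul_sum]

lemma rowsum_pow_anti (D : Matrix κ κ ℝ) (hD : ∀ i j, 0 ≤ D i j)
    (hrow : ∀ i, ∑ j, D i j ≤ 1) (k m : ℕ) (i : κ) :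
    ∑ j, (D ^ (k + m)) i j ≤ ∑ j, (D ^ k) i j := by
  rw [rowsum_pow_add]
  calc ∑ l, (D ^ k) i l * ∑ j, (D ^ m) l j ≤ ∑ l, (D ^ k) i l * 1 :=
        Finset.sum_le_sum fun l _ => mul_le_mul_of_nonneg_left
          (rowsum_pow_le_one D hD hrow m l) (pow_entry_nonneg_s10 D hD k i l)
    _ = ∑ l, (D ^ k) i l := by simp

lemma rowsum_strict_step (D : Matrix κ κ ℝ) (hD : ∀ i j, 0 ≤ D i j)
    (hrow : ∀ i, ∑ j, D i j ≤ 1) {k : ℕ} {v w : κ} (hvw : 0 < D v w)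
    (hk : ∑ u, (D ^ k) w u < 1) : ∑ u, (D ^ (k + 1)) v u < 1 := by
  have hexp : ∑ u, (D ^ (k + 1)) v u = ∑ l, D v l * ∑ u, (D ^ k) l u := by
    have := rowsum_pow_add D 1 k v
    rw [Nat.add_comm 1 k] at this
    simpa [pow_one] using this
  rw [hexp]
  have hsplit : ∑ l, D v l * ∑ u, (D ^ k) l u
      = (∑ l ∈ Finset.univ.erase w, D v l * ∑ u, (D ^ k) l u)
        + D v w * ∑ u, (D ^ k) w u := by
    rw [Finset.sum_erase_add Finset.univ _ (Finset.mem_univ w)]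
  rw [hsplit]
  have h1 : (∑ l ∈ Finset.univ.erase w, D v l * ∑ u, (D ^ k) l u)
      ≤ ∑ l ∈ Finset.univ.erase w, D v l := by
    refine Finset.sum_le_sum fun l _ => ?_
    calc D v l * ∑ u, (D ^ k) l u ≤ D v l * 1 :=
          mul_le_mul_of_nonneg_left (rowsum_pow_le_one D hD hrow k l) (hD v l)
      _ = D v l := mul_one _
  have h2 : D v w * ∑ u, (D ^ k) w u < D v w * 1 := by
    exact mul_lt_mul_of_pos_left hk hvw
  calc (∑ l ∈ Finset.univ.erase w, D v l * ∑ u, (D ^ k) l u) + D v w * ∑ u, (D ^ k) w u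
      < (∑ l ∈ Finset.univ.erase w, D v l) + D v w * 1 := by
        exact add_lt_add_of_le_of_lt h1 h2
    _ = ∑ l, D v l := by rw [mul_one, Finset.sum_erase_add Finset.univ _ (Finset.mem_univ w)]
    _ ≤ 1 := hrow v

/-- Defect propagation along a positive entry. -/
lemma defect_step (D : Matrix κ κ ℝ) (hD : ∀ i j, 0 ≤ D i j)
    (hrow : ∀ i, ∑ j, D i j ≤ 1) {v w : κ} (hvw : 0 < D v w)
    (h : ∃ m, ∑ u, (D ^ m) w u < 1) : ∃ m, ∑ u, (D ^ m) v u < 1 := by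
  obtain ⟨m, hm⟩ := h
  exact ⟨m + 1, rowsum_strict_step D hD hrow hvw hm⟩

lemma specRad_of_isEmpty [IsEmpty κ] (D : Matrix κ κ ℝ) : specRad D = 0 := by
  have : spectrum ℂ (D.map Complex.ofReal) = ∅ := by
    ext z
    simp [spectrum.mem_iff, isUnit_of_subsingleton]
  rw [specRad, this, Set.image_empty, Real.sSup_empty]

/-- If some power of a real matrix has all absolute row sums `< 1`, its spectral
radius is `< 1`. -/
lemma specRad_lt_one_of_pow_s10 (D : Matrix κ κ ℝ) (N : ℕ) (hN : 1 ≤ N)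
    (h : ∀ i, ∑ j, |(D ^ N) i j| < 1) : specRad D < 1 := by
  cases isEmpty_or_nonempty κ with
  | inl hemp => rw [specRad_of_isEmpty]; norm_num
  | inr hne =>
    set a : Matrix κ κ ℂ := D.map Complex.ofReal with ha
    have hapow : ∀ k : ℕ, a ^ k = (D ^ k).map Complex.ofReal := by
      intro k
      have : a = Complex.ofRealHom.mapMatrix D := rfl
      rw [this, ← map_pow]
      rfl
    have hnorm : ‖a ^ N‖ < 1 := by
      rw [Matrix.linfty_opNorm_def]
      have hsup : (Finset.univ.sup fun i : κ => ∑ j, ‖(a ^ N) i j‖₊) < 1 := by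
        rw [Finset.sup_lt_iff (by norm_num : (⊥ : NNReal) < 1)]
        intro i _
        have : ((∑ j, ‖(a ^ N) i j‖₊ : NNReal) : ℝ) < 1 := by
          push_cast
          have : ∀ j, ‖(a ^ N) i j‖ = |(D ^ N) i j| := by
            intro j
            rw [hapow]
            simp [Matrix.map_apply, Complex.norm_real]
          simpa [coe_nnnorm, this] using h i
        exact_mod_cast this
      exact_mod_cast hsup
    set c : ℝ := ‖a ^ N‖ ^ ((1 : ℝ) / N) with hc
    have hc0 : 0 ≤ c := Real.rpow_nonneg (norm_nonneg _) _
    have hc1 : c < 1 := by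
      rcases eq_or_lt_of_le (norm_nonneg (a ^ N)) with h0 | h0
      · rw [hc, ← h0]
        rw [Real.zero_rpow (by positivity)]
        norm_num
      · exact Real.rpow_lt_one (norm_nonneg _) hnorm (by positivity)
    have hub : ∀ x ∈ (fun z : ℂ => ‖z‖) '' spectrum ℂ a, x ≤ c := by
      rintro _ ⟨z, hz, rfl⟩
      have hzN : z ^ N ∈ spectrum ℂ (a ^ N) :=
        spectrum.pow_image_subset a N ⟨z, hz, rfl⟩
      have hle : ‖z ^ N‖ ≤ ‖a ^ N‖ := spectrum.norm_le_norm_of_mem hzN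
      rw [norm_pow] at hle
      have habs : ‖z‖ = ‖z‖ := rfl
      show ‖z‖ ≤ c
      rw [habs]
      have : (‖z‖ ^ N) ^ ((1 : ℝ) / N) ≤ c :=
        Real.rpow_le_rpow (by positivity) hle (by positivity)
      calc ‖z‖ = (‖z‖ ^ N) ^ ((1 : ℝ) / N) := by
            rw [← Real.rpow_natCast ‖z‖ N, ← Real.rpow_mul (norm_nonneg z)]
            rw [mul_one_div, div_self (by exact_mod_cast Nat.one_le_iff_ne_zero.mp hN),
              Real.rpow_one]
        _ ≤ c := this
    calc specRad D ≤ c := Real.sSup_le hub hc0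
      _ < 1 := hc1

/-- Gelfand: spectral radius `< 1` gives a power with small absolute row sums. -/
lemma exists_pow_rowsum_lt [Nonempty κ] (A : Matrix κ κ ℝ) (h : specRad A < 1) :
    ∃ N, 1 ≤ N ∧ ∀ i, ∑ j, |(A ^ N) i j| < 1 := by
  haveI : CompleteSpace (Matrix κ κ ℂ) := FiniteDimensional.complete ℂ _
  set a : Matrix κ κ ℂ := A.map Complex.ofReal with ha
  have hapow : ∀ k : ℕ, a ^ k = (A ^ k).map Complex.ofReal := by
    intro k
    have : a = Complex.ofRealHom.mapMatrix A := rfl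
    rw [this, ← map_pow]
    rfl
  have hbdd : BddAbove ((fun z : ℂ => ‖z‖) '' spectrum ℂ a) := by
    refine ⟨‖a‖, ?_⟩
    rintro _ ⟨z, hz, rfl⟩
    have := spectrum.norm_le_norm_of_mem hz
    exact this
  have hsr : spectralRadius ℂ a < 1 := by
    have hle : spectralRadius ℂ a ≤ ENNReal.ofReal (specRad A) := by
      rw [spectralRadius]
      refine iSup₂_le fun z hz => ?_
      rw [show ((‖z‖₊ : NNReal) : ENNReal) = ENNReal.ofReal ‖z‖ from
        (ENNReal.ofReal_eq_coe_nnreal (norm_nonneg z)).symm]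
      refine ENNReal.ofReal_le_ofReal ?_
      exact le_csSup hbdd ⟨z, hz, rfl⟩
    exact lt_of_le_of_lt hle (ENNReal.ofReal_lt_one.mpr h)
  have hgel := spectrum.pow_nnnorm_pow_one_div_tendsto_nhds_spectralRadius a
  have hev : ∀ᶠ k : ℕ in Filter.atTop, (‖a ^ k‖₊ : ENNReal) ^ (1 / (k : ℝ)) < 1 :=
    hgel.eventually_lt_const hsr
  obtain ⟨N, hNlt, hN1⟩ := (hev.and (Filter.eventually_ge_atTop 1)).exists
  refine ⟨N, hN1, fun i => ?_⟩
  have hNnorm : ‖a ^ N‖₊ < 1 := by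
    by_contra hcon
    push_neg at hcon
    exact absurd (ENNReal.one_le_rpow (by exact_mod_cast hcon)
      (by positivity)) (not_le.mpr hNlt)
  have hNnorm' : ‖a ^ N‖ < 1 := hNnorm
  have hrowle : ∑ j, |(A ^ N) i j| ≤ ‖a ^ N‖ := by
    have h1 : (∑ j, ‖(a ^ N) i j‖₊ : NNReal) ≤ ‖a ^ N‖₊ := by
      rw [Matrix.linfty_opNNNorm_def]
      exact Finset.le_sup (f := fun i => ∑ j, ‖(a ^ N) i j‖₊) (Finset.mem_univ i)
    have h2 : ∀ j, |(A ^ N) i j| = ‖(a ^ N) i j‖ := by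
      intro j
      rw [hapow]
      simp [Matrix.map_apply, Complex.norm_real]
    calc ∑ j, |(A ^ N) i j| = ∑ j, ‖(a ^ N) i j‖ := by simp [h2]
      _ = ((∑ j, ‖(a ^ N) i j‖₊ : NNReal) : ℝ) := by push_cast [coe_nnnorm]; rfl
      _ ≤ ‖a ^ N‖ := by exact_mod_cast h1
  exact lt_of_le_of_lt hrowle hNnorm'

/-- Transfer of eventual row-sum deficiency between matrices with related graphs. -/
lemma transfer {ι : Type*} [Fintype ι] [DecidableEq ι]
    (A : Matrix ι ι ℝ) (D : Matrix κ κ ℝ) (g : ι → κ)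
    (hA : ∀ i j, 0 ≤ A i j)
    (hrow : ∀ i, ∑ w, D (g i) w ≤ ∑ j, A i j)
    (hedge : ∀ i j, 0 < A i j →
      (∃ m, ∑ w, (D ^ m) (g j) w < 1) → ∃ m, ∑ w, (D ^ m) (g i) w < 1)
    (k : ℕ) : ∀ i, (∑ j, (A ^ k) i j < 1) → ∃ m, ∑ w, (D ^ m) (g i) w < 1 := by
  induction k with
  | zero =>
    intro i hi
    exfalso
    rw [pow_zero] at hi
    simp [Matrix.one_apply, Finset.sum_ite_eq] at hi
  | succ k ih =>
    intro i hi
    have hexp : ∑ j, (A ^ (k + 1)) i j = ∑ l, A i l * ∑ j, (A ^ k) l j := by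
      have := rowsum_pow_add A 1 k i
      rw [Nat.add_comm 1 k] at this
      simpa [pow_one] using this
    rw [hexp] at hi
    by_cases hcase : ∃ l, 0 < A i l ∧ ∑ j, (A ^ k) l j < 1
    · obtain ⟨l, hl1, hl2⟩ := hcase
      exact hedge i l hl1 (ih l hl2)
    · push_neg at hcase
      refine ⟨1, ?_⟩
      have hAsum : ∑ l, A i l ≤ ∑ l, A i l * ∑ j, (A ^ k) l j := by
        refine Finset.sum_le_sum fun l _ => ?_
        rcases eq_or_lt_of_le (hA i l) with h0 | h0
        · rw [← h0, zero_mul]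
        · have := hcase l h0
          nlinarith
      have : ∑ w, D (g i) w < 1 := lt_of_le_of_lt (le_trans (hrow i) hAsum) hi
      simpa [pow_one] using this

/-- If every node is eventually deficient, the spectral radius is `< 1`. -/
lemma specRad_lt_one_of_defect (D : Matrix κ κ ℝ) (hD : ∀ i j, 0 ≤ D i j)
    (hrow : ∀ i, ∑ j, D i j ≤ 1)
    (h : ∀ v, ∃ m, ∑ w, (D ^ m) v w < 1) : specRad D < 1 := by
  classical
  set N : ℕ := 1 + Finset.univ.sup fun v => (h v).choose with hNdef
  have hN1 : 1 ≤ N := Nat.le_add_right 1 _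
  refine specRad_lt_one_of_pow_s10 D N hN1 fun i => ?_
  have hmle : (h i).choose ≤ N := by
    have := Finset.le_sup (f := fun v => (h v).choose) (Finset.mem_univ i)
    exact this.trans (by rw [hNdef]; exact Nat.le_add_left _ 1)
  have : ∑ j, (D ^ N) i j < 1 := by
    have heq : N = (h i).choose + (N - (h i).choose) := (Nat.add_sub_cancel' hmle).symm
    calc ∑ j, (D ^ N) i j = ∑ j, (D ^ ((h i).choose + (N - (h i).choose))) i j := by rw [← heq]
      _ ≤ ∑ j, (D ^ (h i).choose) i j := rowsum_pow_anti D hD hrow _ _ i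
      _ < 1 := (h i).choose_spec
  calc ∑ j, |(D ^ N) i j| = ∑ j, (D ^ N) i j := by
        refine Finset.sum_congr rfl fun j _ => abs_of_nonneg (pow_entry_nonneg_s10 D hD N i j)
    _ < 1 := this

end Aux

/-- **Sufficient stability condition (Corollary 1).**
With `W¹ = (I-[β])W` and `W² = [β]W̃`, where `W, W̃` are row-stochastic and
`β_i ∈ (0,1)`: if `ρ(ΛW) < 1` or `ρ(ΛW̃) < 1`, then the FJ-MM model is Schur stable
(`ρ(Ā_d) < 1` for `Ā_d = [[0, I], [ΛW², ΛW¹]]`) and so is its comparison FJ model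
(`ρ(Λ(W¹+W²)) < 1`). -/
theorem fjmm_sufficient_stability
    (n : ℕ) (Λ W Wt : Matrix (Fin n) (Fin n) ℝ) (β : Fin n → ℝ)
    (hΛdiag : ∀ i j, i ≠ j → Λ i j = 0)
    (hΛ : ∀ i, Λ i i ∈ Set.Icc (0:ℝ) 1)
    (hβ : ∀ i, β i ∈ Set.Ioo (0:ℝ) 1)
    (hWnn : ∀ i j, 0 ≤ W i j) (hWrow : ∀ i, ∑ j, W i j = 1)
    (hWtnn : ∀ i j, 0 ≤ Wt i j) (hWtrow : ∀ i, ∑ j, Wt i j = 1)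
    (hstab : specRad (Λ * W) < 1 ∨ specRad (Λ * Wt) < 1) :
    specRad (Matrix.fromBlocks (0 : Matrix (Fin n) (Fin n) ℝ) (1 : Matrix (Fin n) (Fin n) ℝ)
        (Λ * (Matrix.diagonal β * Wt)) (Λ * ((1 - Matrix.diagonal β) * W))) < 1 ∧
      specRad (Λ * ((1 - Matrix.diagonal β) * W + Matrix.diagonal β * Wt)) < 1 := by
  classical
  rcases Nat.eq_zero_or_pos n with hn | hn
  · subst hn
    constructor <;> · rw [specRad_of_isEmpty]; norm_num
  haveI : Nonempty (Fin n) := ⟨⟨0, hn⟩⟩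
  -- basic entry computations
  have hdiagmul : ∀ (X : Matrix (Fin n) (Fin n) ℝ) i j, (Λ * X) i j = Λ i i * X i j := by
    intro X i j
    rw [Matrix.mul_apply]
    rw [Finset.sum_eq_single i]
    · intro l _ hl
      rw [hΛdiag i l (Ne.symm hl), zero_mul]
    · intro hl; exact absurd (Finset.mem_univ i) hl
  have honesub : (1 : Matrix (Fin n) (Fin n) ℝ) - Matrix.diagonal β
      = Matrix.diagonal (fun i => 1 - β i) := by
    rw [← Matrix.diagonal_one, Matrix.diagonal_sub]
  -- the three matrices
  set M : Matrix (Fin n) (Fin n) ℝ :=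
    Λ * ((1 - Matrix.diagonal β) * W + Matrix.diagonal β * Wt) with hM
  set Dblk : Matrix (Fin n ⊕ Fin n) (Fin n ⊕ Fin n) ℝ :=
    Matrix.fromBlocks 0 1 (Λ * (Matrix.diagonal β * Wt)) (Λ * ((1 - Matrix.diagonal β) * W))
    with hDblk
  have hMe : ∀ i j, M i j = Λ i i * ((1 - β i) * W i j + β i * Wt i j) := by
    intro i j
    rw [hM, hdiagmul, Matrix.add_apply, honesub, Matrix.diagonal_mul, Matrix.diagonal_mul]
  have hW1e : ∀ i j, (Λ * ((1 - Matrix.diagonal β) * W)) i j = Λ i i * ((1 - β i) * W i j) := by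
    intro i j
    rw [hdiagmul, honesub, Matrix.diagonal_mul]
  have hW2e : ∀ i j, (Λ * (Matrix.diagonal β * Wt)) i j = Λ i i * (β i * Wt i j) := by
    intro i j
    rw [hdiagmul, Matrix.diagonal_mul]
  have hβ0 : ∀ i, 0 < β i := fun i => (hβ i).1
  have hβ1 : ∀ i, β i < 1 := fun i => (hβ i).2
  have hΛ0 : ∀ i, 0 ≤ Λ i i := fun i => (hΛ i).1
  have hΛ1 : ∀ i, Λ i i ≤ 1 := fun i => (hΛ i).2
  -- nonnegativity
  have hMnn : ∀ i j, 0 ≤ M i j := by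
    intro i j
    rw [hMe]
    refine mul_nonneg (hΛ0 i) (add_nonneg (mul_nonneg ?_ (hWnn i j))
      (mul_nonneg (hβ0 i).le (hWtnn i j)))
    linarith [hβ1 i]
  have hDnn : ∀ v w, 0 ≤ Dblk v w := by
    rintro (i | i) (j | j) <;>
      simp only [hDblk, Matrix.fromBlocks_apply₁₁, Matrix.fromBlocks_apply₁₂,
        Matrix.fromBlocks_apply₂₁, Matrix.fromBlocks_apply₂₂, Matrix.zero_apply]
    · exact le_rfl
    · rw [Matrix.one_apply]; split <;> norm_num
    · rw [hW2e]
      exact mul_nonneg (hΛ0 i) (mul_nonneg (hβ0 i).le (hWtnn i j))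
    · rw [hW1e]
      refine mul_nonneg (hΛ0 i) (mul_nonneg ?_ (hWnn i j))
      linarith [hβ1 i]
  -- row sums
  have hone_row : ∀ i : Fin n, ∑ j, (1 : Matrix (Fin n) (Fin n) ℝ) i j = 1 := by
    intro i
    simp [Matrix.one_apply, Finset.sum_ite_eq]
  have hMrow : ∀ i, ∑ j, M i j = Λ i i := by
    intro i
    simp only [hMe]
    rw [← Finset.mul_sum]
    rw [Finset.sum_add_distrib, ← Finset.mul_sum, ← Finset.mul_sum, hWrow, hWtrow]
    ring
  have hArow : ∀ i, ∑ j, (Λ * W) i j = Λ i i := by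
    intro i
    simp only [hdiagmul]
    rw [← Finset.mul_sum, hWrow, mul_one]
  have hAtrow : ∀ i, ∑ j, (Λ * Wt) i j = Λ i i := by
    intro i
    simp only [hdiagmul]
    rw [← Finset.mul_sum, hWtrow, mul_one]
  have hDrow : ∀ v, ∑ w, Dblk v w ≤ 1 := by
    rintro (i | i) <;> rw [Fintype.sum_sum_type]
    · simp only [hDblk, Matrix.fromBlocks_apply₁₁, Matrix.fromBlocks_apply₁₂, Matrix.zero_apply]
      rw [Finset.sum_const_zero, zero_add, hone_row]
    · simp only [hDblk, Matrix.fromBlocks_apply₂₁, Matrix.fromBlocks_apply₂₂]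
      have h1 : ∑ j, (Λ * (Matrix.diagonal β * Wt)) i j = Λ i i * β i := by
        simp only [hW2e]
        rw [← Finset.mul_sum, ← Finset.mul_sum, hWtrow, mul_one]
      have h2 : ∑ j, (Λ * ((1 - Matrix.diagonal β) * W)) i j = Λ i i * (1 - β i) := by
        simp only [hW1e]
        rw [← Finset.mul_sum, ← Finset.mul_sum, hWrow, mul_one]
      rw [h1, h2]
      have := hΛ0 i; have := hΛ1 i
      nlinarith
  have hDrow_inr : ∀ i, ∑ w, Dblk (Sum.inr i) w = Λ i i := by
    intro i
    rw [Fintype.sum_sum_type]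
    simp only [hDblk, Matrix.fromBlocks_apply₂₁, Matrix.fromBlocks_apply₂₂]
    have h1 : ∑ j, (Λ * (Matrix.diagonal β * Wt)) i j = Λ i i * β i := by
      simp only [hW2e]
      rw [← Finset.mul_sum, ← Finset.mul_sum, hWtrow, mul_one]
    have h2 : ∑ j, (Λ * ((1 - Matrix.diagonal β) * W)) i j = Λ i i * (1 - β i) := by
      simp only [hW1e]
      rw [← Finset.mul_sum, ← Finset.mul_sum, hWrow, mul_one]
    rw [h1, h2]
    ring
  have hMrow' : ∀ i, ∑ j, M i j ≤ 1 := fun i => (hMrow i).le.trans (hΛ1 i)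
  -- positive-entry facts
  have hposA : ∀ i j, 0 < (Λ * W) i j → 0 < Λ i i ∧ 0 < W i j := by
    intro i j h
    rw [hdiagmul] at h
    constructor
    · rcases eq_or_lt_of_le (hΛ0 i) with h0 | h0
      · rw [← h0, zero_mul] at h; linarith
      · exact h0
    · rcases eq_or_lt_of_le (hWnn i j) with h0 | h0
      · rw [← h0, mul_zero] at h; linarith
      · exact h0
  have hposAt : ∀ i j, 0 < (Λ * Wt) i j → 0 < Λ i i ∧ 0 < Wt i j := by
    intro i j h
    rw [hdiagmul] at h
    constructor
    · rcases eq_or_lt_of_le (hΛ0 i) with h0 | h0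
      · rw [← h0, zero_mul] at h; linarith
      · exact h0
    · rcases eq_or_lt_of_le (hWtnn i j) with h0 | h0
      · rw [← h0, mul_zero] at h; linarith
      · exact h0
  -- edges in Dblk:
  have hblk_top : ∀ j : Fin n, 0 < Dblk (Sum.inl j) (Sum.inr j) := by
    intro j
    simp only [hDblk, Matrix.fromBlocks_apply₁₂]
    rw [Matrix.one_apply_eq]
    norm_num
  -- deficiency transfer for the two cases
  have main : (∃ (A : Matrix (Fin n) (Fin n) ℝ), (∀ i j, 0 ≤ A i j) ∧
        (∀ i, ∑ j, A i j = Λ i i) ∧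
        (∀ i j, 0 < A i j → 0 < M i j) ∧
        (∀ i j, 0 < A i j →
          (∃ m, ∑ w, (Dblk ^ m) (Sum.inr j) w < 1) → ∃ m, ∑ w, (Dblk ^ m) (Sum.inr i) w < 1) ∧
        specRad A < 1) →
      specRad Dblk < 1 ∧ specRad M < 1 := by
    rintro ⟨A, hAnn, hArows, hedgeM, hedgeD, hAspec⟩
    obtain ⟨N, hN1, hNsmall⟩ := exists_pow_rowsum_lt A hAspec
    have hNsmall' : ∀ i, ∑ j, (A ^ N) i j < 1 := by
      intro i
      refine lt_of_le_of_lt (Finset.sum_le_sum fun j _ => le_abs_self _) (hNsmall i)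
    have hMdef : ∀ i, ∃ m, ∑ w, (M ^ m) i w < 1 := by
      intro i
      refine transfer A M id hAnn (fun i => by simp only [id]; rw [hMrow, hArows]) ?_ N i
        (hNsmall' i)
      intro i j hij hdefj
      exact defect_step M hMnn hMrow' (hedgeM i j hij) hdefj
    have hDdef_inr : ∀ i, ∃ m, ∑ w, (Dblk ^ m) (Sum.inr i) w < 1 := by
      intro i
      exact transfer A Dblk Sum.inr hAnn
        (fun i => by rw [hDrow_inr, hArows]) hedgeD N i (hNsmall' i)
    have hDdef : ∀ v, ∃ m, ∑ w, (Dblk ^ m) v w < 1 := by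
      rintro (i | i)
      · exact defect_step Dblk hDnn hDrow (hblk_top i) (hDdef_inr i)
      · exact hDdef_inr i
    exact ⟨specRad_lt_one_of_defect Dblk hDnn hDrow hDdef,
      specRad_lt_one_of_defect M hMnn hMrow' hMdef⟩
  apply main
  rcases hstab with hst | hst
  · refine ⟨Λ * W, fun i j => by rw [hdiagmul]; exact mul_nonneg (hΛ0 i) (hWnn i j),
      hArow, ?_, ?_, hst⟩
    · intro i j h
      obtain ⟨hΛpos, hWpos⟩ := hposA i j h
      rw [hMe]
      have h1 : 0 < (1 - β i) * W i j := mul_pos (by linarith [hβ1 i]) hWpos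
      have h2 : 0 ≤ β i * Wt i j := mul_nonneg (hβ0 i).le (hWtnn i j)
      exact mul_pos hΛpos (by linarith)
    · intro i j h hdefj
      obtain ⟨hΛpos, hWpos⟩ := hposA i j h
      have hedge : 0 < Dblk (Sum.inr i) (Sum.inr j) := by
        simp only [hDblk, Matrix.fromBlocks_apply₂₂]
        rw [hW1e]
        exact mul_pos hΛpos (mul_pos (by linarith [hβ1 i]) hWpos)
      exact defect_step Dblk hDnn hDrow hedge hdefj
  · refine ⟨Λ * Wt, fun i j => by rw [hdiagmul]; exact mul_nonneg (hΛ0 i) (hWtnn i j),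
      hAtrow, ?_, ?_, hst⟩
    · intro i j h
      obtain ⟨hΛpos, hWtpos⟩ := hposAt i j h
      rw [hMe]
      have h1 : 0 < β i * Wt i j := mul_pos (hβ0 i) hWtpos
      have h2 : 0 ≤ (1 - β i) * W i j := mul_nonneg (by linarith [hβ1 i]) (hWnn i j)
      exact mul_pos hΛpos (by linarith)
    · intro i j h hdefj
      obtain ⟨hΛpos, hWtpos⟩ := hposAt i j h
      have hedge : 0 < Dblk (Sum.inr i) (Sum.inl j) := by
        simp only [hDblk, Matrix.fromBlocks_apply₂₁]
        rw [hW2e]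
        exact mul_pos hΛpos (mul_pos (hβ0 i) hWtpos)
      exact defect_step Dblk hDnn hDrow hedge
        (defect_step Dblk hDnn hDrow (hblk_top j) hdefj)
end

section
/- The spectral radii of the FJ-MM system matrix and of the comparison FJ system matrix satisfy ρ(Ā_d) ≥ ρ(Ā), where Ā_d = [[0, I],[Λ W^(2), Λ W^(1)]] and Ā = Λ(W^(1)+W^(2)). Hence the FJ-MM model converges no faster than its comparison FJ model. -/
open Matrix

section Aux

attribute [local instance] Matrix.linftyOpNormedRing Matrix.linftyOpNormedAlgebra

open Filter

/-- Powers of the complexification agree with complexification of powers. -/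
lemma map_ofReal_pow {N : Type*} [Fintype N] [DecidableEq N] (M : Matrix N N ℝ) (k : ℕ) :
    (M.map Complex.ofReal) ^ k = (M ^ k).map Complex.ofReal := by
  induction k with
  | zero =>
    simp [pow_zero]
  | succ k ih =>
    rw [pow_succ, pow_succ, ih]
    ext i j
    simp [Matrix.mul_apply, Matrix.map_apply]

lemma linfty_nnnorm_map_ofReal {N : Type*} [Fintype N] [DecidableEq N] (M : Matrix N N ℝ) :
    ‖M.map Complex.ofReal‖₊ = ‖M‖₊ := by
  rw [Matrix.linfty_opNNNorm_def, Matrix.linfty_opNNNorm_def]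
  congr 1
  funext i
  congr 1
  funext j
  simp [Matrix.map_apply]

/-- Key lemma: a nonnegative matrix with a nonnegative, nonzero `r`-subinvariant vector
has spectral radius at least `r`. -/
lemma specRad_ge_of_subinvariant {N : Type*} [Fintype N] [DecidableEq N]
    (M : Matrix N N ℝ) (hM : ∀ i j, 0 ≤ M i j)
    (w : N → ℝ) (hw : ∀ i, 0 ≤ w i) (hw0 : w ≠ 0)
    {r : ℝ} (hr : 0 ≤ r) (hsub : ∀ i, r * w i ≤ (M *ᵥ w) i) :
    r ≤ specRad M := by
  obtain ⟨j0, hj0⟩ := Function.ne_iff.mp hw0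
  haveI : Nonempty N := ⟨j0⟩
  -- iterate the subinvariance
  have hmono : ∀ (u u' : N → ℝ), (∀ i, u i ≤ u' i) → ∀ i, (M *ᵥ u) i ≤ (M *ᵥ u') i := by
    intro u u' huu i
    simp only [Matrix.mulVec, dotProduct]
    exact Finset.sum_le_sum fun j _ => mul_le_mul_of_nonneg_left (huu j) (hM i j)
  have hiter : ∀ (k : ℕ) (i : N), r ^ k * w i ≤ ((M ^ k) *ᵥ w) i := by
    intro k
    induction k with
    | zero => intro i; simp [Matrix.one_mulVec]
    | succ k ih =>
      intro i
      have h1 : (M *ᵥ fun j => r ^ k * w j) i ≤ (M *ᵥ ((M ^ k) *ᵥ w)) i := hmono _ _ ih i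
      have h2 : r ^ k * (M *ᵥ w) i = (M *ᵥ fun j => r ^ k * w j) i := by
        simp only [Matrix.mulVec, dotProduct, Finset.mul_sum]
        exact Finset.sum_congr rfl fun j _ => by ring
      calc r ^ (k + 1) * w i = r ^ k * (r * w i) := by ring
        _ ≤ r ^ k * (M *ᵥ w) i :=
            mul_le_mul_of_nonneg_left (hsub i) (pow_nonneg hr k)
        _ = (M *ᵥ fun j => r ^ k * w j) i := h2
        _ ≤ (M *ᵥ ((M ^ k) *ᵥ w)) i := h1
        _ = ((M ^ (k + 1)) *ᵥ w) i := by rw [pow_succ', Matrix.mulVec_mulVec]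
  -- pick an index where `w` attains its sup norm
  obtain ⟨i0, -, hmax⟩ := Finset.exists_max_image Finset.univ w ⟨j0, Finset.mem_univ _⟩
  have hwi0pos : 0 < w i0 := by
    rcases lt_or_eq_of_le (hw j0) with h | h
    · exact lt_of_lt_of_le h (hmax j0 (Finset.mem_univ _))
    · exact absurd h.symm hj0
  have hwi0 : w i0 = ‖w‖ := by
    have h1 : w i0 ≤ ‖w‖ := le_trans (le_abs_self _)
      (by rw [← Real.norm_eq_abs]; exact norm_le_pi_norm w i0)
    have h2 : ‖w‖ ≤ w i0 := by
      rw [pi_norm_le_iff_of_nonneg (le_of_lt hwi0pos)]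
      intro i
      rw [Real.norm_eq_abs, abs_of_nonneg (hw i)]
      exact hmax i (Finset.mem_univ _)
    linarith
  have hwnormpos : 0 < ‖w‖ := hwi0 ▸ hwi0pos
  -- norm lower bound
  have hnormk : ∀ k : ℕ, r ^ k ≤ ‖M ^ k‖ := by
    intro k
    have h1 : r ^ k * w i0 ≤ ((M ^ k) *ᵥ w) i0 := hiter k i0
    have h2 : ((M ^ k) *ᵥ w) i0 ≤ ‖(M ^ k) *ᵥ w‖ := le_trans (le_abs_self _)
      (by rw [← Real.norm_eq_abs]; exact norm_le_pi_norm _ i0)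
    have h3 : ‖(M ^ k) *ᵥ w‖ ≤ ‖M ^ k‖ * ‖w‖ := Matrix.linfty_opNorm_mulVec _ _
    have h4 : r ^ k * ‖w‖ ≤ ‖M ^ k‖ * ‖w‖ := by
      rw [← hwi0]
      exact le_trans h1 (le_trans h2 (by rw [hwi0]; exact h3))
    exact (mul_le_mul_iff_of_pos_right hwnormpos).mp h4
  -- Gelfand's formula
  set Mc : Matrix N N ℂ := M.map Complex.ofReal with hMc
  have hgel := spectrum.pow_nnnorm_pow_one_div_tendsto_nhds_spectralRadius Mc
  have hle : ENNReal.ofReal r ≤ spectralRadius ℂ Mc := by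
    refine le_of_tendsto_of_tendsto tendsto_const_nhds hgel ?_
    filter_upwards [Filter.eventually_ge_atTop 1] with k hk
    have hk0 : (k : ℝ) ≠ 0 := Nat.cast_ne_zero.mpr (by omega)
    have h1 : (ENNReal.ofReal r) ^ (k : ℕ) ≤ (‖Mc ^ k‖₊ : ENNReal) := by
      rw [← ENNReal.ofReal_pow hr, hMc, map_ofReal_pow, linfty_nnnorm_map_ofReal,
        ← ENNReal.ofReal_coe_nnreal, coe_nnnorm]
      exact ENNReal.ofReal_le_ofReal (hnormk k)
    calc (ENNReal.ofReal r : ENNReal)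
        = ((ENNReal.ofReal r) ^ (k : ℕ)) ^ (1 / (k : ℝ)) := by
          rw [← ENNReal.rpow_natCast, ← ENNReal.rpow_mul, mul_one_div_cancel hk0,
            ENNReal.rpow_one]
      _ ≤ (‖Mc ^ k‖₊ : ENNReal) ^ (1 / (k : ℝ)) :=
          ENNReal.rpow_le_rpow h1 (by positivity)
  -- relate `spectralRadius` to `specRad`
  have hbdd : BddAbove ((fun z : ℂ => ‖z‖) '' spectrum ℂ Mc) :=
    ((spectrum.isCompact Mc).image continuous_norm).bddAbove
  have hsup : spectralRadius ℂ Mc ≤ ENNReal.ofReal (specRad M) := by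
    rw [spectralRadius]
    refine iSup₂_le fun z hz => ?_
    rw [← ENNReal.ofReal_coe_nnreal, coe_nnnorm]
    refine ENNReal.ofReal_le_ofReal ?_
    exact le_csSup hbdd ⟨z, hz, rfl⟩
  have h0 : 0 ≤ specRad M :=
    Real.sSup_nonneg (by rintro x ⟨z, hz, rfl⟩; exact norm_nonneg z)
  exact (ENNReal.ofReal_le_ofReal_iff h0).mp (hle.trans hsup)

end Aux

/-- **Delay slows down convergence (Proposition 2).**
`ρ(Ā_d) ≥ ρ(Ā)` where `Ā_d = [[0, I], [ΛW², ΛW¹]]` and `Ā = Λ(W¹+W²)`: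
the FJ-MM model converges no faster than its comparison FJ model. -/
theorem fjmm_spectral_radius_ge_comparison
    (n : ℕ) (Λ W1 W2 : Matrix (Fin n) (Fin n) ℝ)
    (hΛdiag : ∀ i j, i ≠ j → Λ i j = 0)
    (hΛ : ∀ i, Λ i i ∈ Set.Icc (0:ℝ) 1)
    (hW1 : ∀ i j, 0 ≤ W1 i j) (hW2 : ∀ i j, 0 ≤ W2 i j)
    (hrow : ∀ i, ∑ j, (W1 + W2) i j = 1) :
    specRad (Λ * (W1 + W2)) ≤
      specRad (Matrix.fromBlocks (0 : Matrix (Fin n) (Fin n) ℝ) (1 : Matrix (Fin n) (Fin n) ℝ)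
        (Λ * W2) (Λ * W1)) := by
  set A : Matrix (Fin n) (Fin n) ℝ := Λ * (W1 + W2) with hA
  set M2 : Matrix (Fin n ⊕ Fin n) (Fin n ⊕ Fin n) ℝ :=
    Matrix.fromBlocks 0 1 (Λ * W2) (Λ * W1) with hM2
  -- entries of `Λ * S`
  have hmulapp : ∀ (S : Matrix (Fin n) (Fin n) ℝ) (i j : Fin n),
      (Λ * S) i j = Λ i i * S i j := by
    intro S i j
    rw [Matrix.mul_apply]
    refine Finset.sum_eq_single_of_mem i (Finset.mem_univ _) fun k _ hk => ?_
    rw [hΛdiag i k (Ne.symm hk), zero_mul]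
  have hAnn : ∀ i j, 0 ≤ A i j := by
    intro i j
    rw [hA, hmulapp]
    exact mul_nonneg (hΛ i).1 (by simpa [Matrix.add_apply] using add_nonneg (hW1 i j) (hW2 i j))
  have hA1nn : ∀ i j, 0 ≤ (Λ * W1) i j := fun i j => by
    rw [hmulapp]; exact mul_nonneg (hΛ i).1 (hW1 i j)
  have hA2nn : ∀ i j, 0 ≤ (Λ * W2) i j := fun i j => by
    rw [hmulapp]; exact mul_nonneg (hΛ i).1 (hW2 i j)
  have hArow : ∀ i, ∑ j, A i j = Λ i i := by
    intro i
    simp only [hA, hmulapp]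
    rw [← Finset.mul_sum, hrow i, mul_one]
  -- main inequality, one spectrum element at a time
  refine Real.sSup_le ?_ (Real.sSup_nonneg (by rintro x ⟨z, hz, rfl⟩; exact norm_nonneg z))
  rintro b ⟨z, hz, rfl⟩
  set r : ℝ := ‖z‖ with hrdef
  have hrnn : 0 ≤ r := norm_nonneg z
  -- extract an eigenvector
  set Ac : Matrix (Fin n) (Fin n) ℂ := A.map Complex.ofReal with hAc
  have hz' : ¬IsUnit (algebraMap ℂ (Matrix (Fin n) (Fin n) ℂ) z - Ac) := spectrum.mem_iff.mp hz
  have hdet : (algebraMap ℂ (Matrix (Fin n) (Fin n) ℂ) z - Ac).det = 0 := by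
    by_contra h
    exact hz' ((Matrix.isUnit_iff_isUnit_det _).mpr (isUnit_iff_ne_zero.mpr h))
  obtain ⟨v, hv0, hv⟩ := (Matrix.exists_mulVec_eq_zero_iff).mpr hdet
  have hev : Ac *ᵥ v = z • v := by
    rw [Matrix.sub_mulVec] at hv
    have h2 : algebraMap ℂ (Matrix (Fin n) (Fin n) ℂ) z *ᵥ v = z • v := by
      rw [Algebra.algebraMap_eq_smul_one, Matrix.smul_mulVec, Matrix.one_mulVec]
    rw [h2] at hv
    exact (sub_eq_zero.mp hv).symm
  -- the nonnegative vector |v|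
  set x : Fin n → ℝ := fun i => ‖v i‖ with hx
  have hxnn : ∀ i, 0 ≤ x i := fun i => norm_nonneg _
  obtain ⟨j0, hvj0⟩ := Function.ne_iff.mp hv0
  have hxj0 : 0 < x j0 := norm_pos_iff.mpr (by simpa using hvj0)
  -- subinvariance for `A`
  have hxsub : ∀ i, r * x i ≤ (A *ᵥ x) i := by
    intro i
    have h1 : (Ac *ᵥ v) i = z * v i := by rw [hev]; simp
    have h2 : (Ac *ᵥ v) i = ∑ j, (A i j : ℂ) * v j := by
      simp [Matrix.mulVec, dotProduct, hAc, Matrix.map_apply]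
    calc r * x i = ‖z * v i‖ := by rw [norm_mul]
      _ = ‖∑ j, (A i j : ℂ) * v j‖ := by rw [← h1, h2]
      _ ≤ ∑ j, ‖(A i j : ℂ) * v j‖ := norm_sum_le _ _
      _ = ∑ j, A i j * x j := by
          refine Finset.sum_congr rfl fun j _ => ?_
          rw [norm_mul, Complex.norm_real, Real.norm_eq_abs, abs_of_nonneg (hAnn i j)]
      _ = (A *ᵥ x) i := by simp [Matrix.mulVec, dotProduct]
  -- `r ≤ 1`
  obtain ⟨i0, -, hmax⟩ := Finset.exists_max_image Finset.univ x ⟨j0, Finset.mem_univ _⟩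
  have hxi0pos : 0 < x i0 := lt_of_lt_of_le hxj0 (hmax j0 (Finset.mem_univ _))
  have hr1 : r ≤ 1 := by
    have h1 : r * x i0 ≤ 1 * x i0 := by
      calc r * x i0 ≤ (A *ᵥ x) i0 := hxsub i0
        _ = ∑ j, A i0 j * x j := by simp [Matrix.mulVec, dotProduct]
        _ ≤ ∑ j, A i0 j * x i0 := Finset.sum_le_sum fun j _ =>
            mul_le_mul_of_nonneg_left (hmax j (Finset.mem_univ _)) (hAnn i0 j)
        _ = (∑ j, A i0 j) * x i0 := by rw [Finset.sum_mul]
        _ = Λ i0 i0 * x i0 := by rw [hArow i0]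
        _ ≤ 1 * x i0 := mul_le_mul_of_nonneg_right (hΛ i0).2 (le_of_lt hxi0pos)
    exact (mul_le_mul_iff_of_pos_right hxi0pos).mp h1
  -- the subinvariant vector for the block matrix
  set w : Fin n ⊕ Fin n → ℝ := Sum.elim x (fun i => r * x i) with hw
  have hwnn : ∀ p, 0 ≤ w p := by rintro (i | i) <;> simp [hw, hxnn, mul_nonneg hrnn (hxnn _)]
  have hw0 : w ≠ 0 := by
    refine Function.ne_iff.mpr ⟨Sum.inl j0, ?_⟩
    simpa [hw] using ne_of_gt hxj0
  have hM2nn : ∀ p q, 0 ≤ M2 p q := by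
    rintro (i | i) (j | j)
    · simp [hM2]
    · simp only [hM2, Matrix.fromBlocks_apply₁₂]
      by_cases h : i = j <;> simp [Matrix.one_apply, h]
    · simpa [hM2] using hA2nn i j
    · simpa [hM2] using hA1nn i j
  have hfb : M2 *ᵥ w = Sum.elim ((0 : Matrix (Fin n) (Fin n) ℝ) *ᵥ x + 1 *ᵥ (fun i => r * x i))
      ((Λ * W2) *ᵥ x + (Λ * W1) *ᵥ (fun i => r * x i)) := by
    rw [hM2, hw]
    rw [Matrix.fromBlocks_mulVec]
    rfl
  have hsubw : ∀ p, r * w p ≤ (M2 *ᵥ w) p := by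
    rintro (i | i)
    · rw [hfb]
      simp [hw, Matrix.zero_mulVec, Matrix.one_mulVec]
    · rw [hfb]
      have e1 : ((Λ * W1) *ᵥ (fun j => r * x j)) i = r * ((Λ * W1) *ᵥ x) i := by
        simp only [Matrix.mulVec, dotProduct, Finset.mul_sum]
        exact Finset.sum_congr rfl fun j _ => by ring
      have e2 : ((Λ * W2) *ᵥ x) i + ((Λ * W1) *ᵥ x) i = (A *ᵥ x) i := by
        have : Λ * W2 + Λ * W1 = A := by rw [hA, Matrix.mul_add, add_comm]
        rw [← this, Matrix.add_mulVec]
        simp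
      have h2nn : 0 ≤ ((Λ * W2) *ᵥ x) i := by
        simp only [Matrix.mulVec, dotProduct]
        exact Finset.sum_nonneg fun j _ => mul_nonneg (hA2nn i j) (hxnn j)
      have h1nn : 0 ≤ ((Λ * W1) *ᵥ x) i := by
        simp only [Matrix.mulVec, dotProduct]
        exact Finset.sum_nonneg fun j _ => mul_nonneg (hA1nn i j) (hxnn j)
      have key : r * (r * x i) ≤ ((Λ * W2) *ᵥ x) i + r * ((Λ * W1) *ᵥ x) i := by
        calc r * (r * x i) ≤ r * (A *ᵥ x) i :=
              mul_le_mul_of_nonneg_left (hxsub i) hrnn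
          _ = r * ((Λ * W2) *ᵥ x) i + r * ((Λ * W1) *ᵥ x) i := by rw [← e2]; ring
          _ ≤ ((Λ * W2) *ᵥ x) i + r * ((Λ * W1) *ᵥ x) i := by
              have := mul_le_of_le_one_left h2nn hr1
              linarith
      simpa [hw, e1] using key
  exact specRad_ge_of_subinvariant M2 hM2nn w hwnn hw0 hrnn hsubw
end
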